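/- arXiv:2111.03479 — 9 statements merged into one kernel-verified Lean document; each statement's English description precedes it below -/
import Mathlib

section
/- If a permutation σ' is obtained from a permutation σ by inflating a single entry into a monotone (increasing or decreasing) sequence of length 2, then tw(σ') ≤ tw(σ) + 1. -/
/-- A tree decomposition of a graph `G`. -/
structure TreeDecomp {V : Type} (G : SimpleGraph V) where
  ι : Type
  T : SimpleGraph ι
  conn : T.Connected
  acyc : T.IsAcyclic
  bag : ι → Finset V
  mem_vert : ∀ v : V, ∃ i, v ∈ bag i
  mem_edge : ∀ u v : V, G.Adj u v → ∃ i, u ∈ bag i ∧ v ∈ bag i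
  coherent : ∀ v : V, ∀ i j : ι, v ∈ bag i → v ∈ bag j →
    ∀ p : T.Walk i j, p.IsPath → ∀ x ∈ p.support, v ∈ bag x

/-- The tree-width of a graph, via tree decompositions. -/
noncomputable def treewidth {V : Type} (G : SimpleGraph V) : ℕ :=
  sInf {n : ℕ | ∃ d : TreeDecomp G, ∀ i, (d.bag i).card ≤ n + 1}

/-- The incidence graph of a permutation. -/
def incGraph (n : ℕ) (π : Equiv.Perm (Fin n)) : SimpleGraph (Fin n) :=
  SimpleGraph.fromRel (fun i j => i.val + 1 = j.val ∨ (π i).val + 1 = (π j).val)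

/-- `σ'` is obtained from `σ` by inflating the entry at position `p` into a monotone
pair (increasing if `incr`, decreasing otherwise): entries of `σ` other than the one at
position `p` are kept (with positions after `p` shifted by one and values above the
inflated value shifted by one), and positions `p`, `p+1` of `σ'` carry the two new
values replacing the old value `v = σ p`. -/
def IsInflationAt {n : ℕ} (σ : Equiv.Perm (Fin n)) (σ' : Equiv.Perm (Fin (n + 1)))
    (p : Fin n) (incr : Bool) : Prop :=
  (∀ j : Fin n, j.val < p.val →
      ((σ j).val < (σ p).val ∧
        (σ' ⟨j.val, Nat.lt_succ_of_lt j.isLt⟩).val = (σ j).val) ∨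
      ((σ p).val < (σ j).val ∧
        (σ' ⟨j.val, Nat.lt_succ_of_lt j.isLt⟩).val = (σ j).val + 1)) ∧
  (∀ j : Fin n, p.val < j.val →
      ((σ j).val < (σ p).val ∧
        (σ' ⟨j.val + 1, Nat.succ_lt_succ j.isLt⟩).val = (σ j).val) ∨
      ((σ p).val < (σ j).val ∧
        (σ' ⟨j.val + 1, Nat.succ_lt_succ j.isLt⟩).val = (σ j).val + 1)) ∧
  (σ' ⟨p.val, Nat.lt_succ_of_lt p.isLt⟩).val =
    (if incr then (σ p).val else (σ p).val + 1) ∧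
  (σ' ⟨p.val + 1, Nat.succ_lt_succ p.isLt⟩).val =
    (if incr then (σ p).val + 1 else (σ p).val)

namespace InflAux

variable {n : ℕ}

/-- collapse positions `p` and `p+1` of `Fin (n+1)` to `p`. -/
def collapse (p : Fin n) (i : Fin (n + 1)) : Fin n :=
  if h : i.val ≤ p.val then ⟨i.val, lt_of_le_of_lt h p.isLt⟩
  else ⟨i.val - 1, by have := i.isLt; omega⟩

def emb0 (p : Fin n) (x : Fin n) : Fin (n + 1) :=
  if x.val ≤ p.val then ⟨x.val, Nat.lt_succ_of_lt x.isLt⟩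
  else ⟨x.val + 1, Nat.succ_lt_succ x.isLt⟩

def emb1 (p : Fin n) (x : Fin n) : Fin (n + 1) :=
  if x.val = p.val then ⟨x.val + 1, Nat.succ_lt_succ x.isLt⟩ else emb0 p x

lemma collapse_emb0 (p x : Fin n) : collapse p (emb0 p x) = x := by
  by_cases h : x.val ≤ p.val
  · simp [collapse, emb0, h]
  · have h' : ¬ (x.val + 1 ≤ p.val) := by omega
    simp [collapse, emb0, h, h']

lemma collapse_emb1 (p x : Fin n) : collapse p (emb1 p x) = x := by
  unfold emb1
  split_ifs with h1
  · have h' : ¬ (x.val + 1 ≤ p.val) := by omega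
    simp [collapse, h']
  · exact collapse_emb0 p x

lemma emb_collapse (p : Fin n) (j : Fin (n + 1)) :
    emb0 p (collapse p j) = j ∨ emb1 p (collapse p j) = j := by
  unfold collapse emb0 emb1
  by_cases h : j.val ≤ p.val
  · left
    rw [dif_pos h]
    simp only [if_pos h]
  · rw [dif_neg h]
    by_cases h2 : j.val - 1 = p.val
    · right
      simp only [if_pos h2]
      apply Fin.ext; simp; omega
    · left
      simp only
      rw [if_neg (by omega)]
      apply Fin.ext; simp; omega

lemma emb1_val (p x : Fin n) :
    emb1 p x = emb0 p x ∨ emb1 p x = ⟨p.val + 1, Nat.succ_lt_succ p.isLt⟩ := by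
  unfold emb1
  split_ifs with h
  · right; apply Fin.ext; simp [h]
  · left; rfl

/-- positions lemma -/
lemma pos_step (p : Fin n) (u v : Fin (n + 1)) (huv : u.val + 1 = v.val) :
    collapse p u = collapse p v ∨ (collapse p u).val + 1 = (collapse p v).val := by
  unfold collapse
  split_ifs with h1 h2 h2 <;> simp only [Fin.ext_iff] <;> omega

end InflAux

open InflAux in
/-- Inflating a single entry of a permutation into a monotone sequence of length 2
increases the tree-width of the incidence graph by at most 1. -/
theorem treewidth_inflate_le {n : ℕ} (σ : Equiv.Perm (Fin n)) (σ' : Equiv.Perm (Fin (n + 1)))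
    (p : Fin n) (incr : Bool) (h : IsInflationAt σ σ' p incr) :
    treewidth (incGraph (n + 1) σ') ≤ treewidth (incGraph n σ) + 1 := by
  classical
  obtain ⟨h1, h2, h3, h4⟩ := h
  set v0 := (σ p).val with hv0
  -- the value map
  have hval : ∀ u : Fin (n + 1),
      (σ (collapse p u)).val = (if (σ' u).val ≤ v0 then (σ' u).val else (σ' u).val - 1) := by
    intro u
    rcases lt_trichotomy u.val p.val with hu | hu | hu
    · have hlt : u.val < n := lt_trans hu p.isLt
      set j : Fin n := ⟨u.val, hlt⟩ with hj
      have hcu : collapse p u = j := by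
        unfold collapse; rw [dif_pos (le_of_lt hu)]
      have hu' : (⟨j.val, Nat.lt_succ_of_lt j.isLt⟩ : Fin (n + 1)) = u := by
        apply Fin.ext; rfl
      rcases h1 j hu with ⟨hlt2, heq⟩ | ⟨hlt2, heq⟩
      · rw [hcu, hu'.symm.symm] at *
        rw [hcu]
        rw [← hu', heq] at *
        rw [if_pos (le_of_lt hlt2)]
      · rw [hcu, ← hu', heq, if_neg (by omega)]
        omega
    · have hcu : collapse p u = p := by
        unfold collapse; rw [dif_pos (le_of_eq hu)]; apply Fin.ext; exact hu
      have hu' : (⟨p.val, Nat.lt_succ_of_lt p.isLt⟩ : Fin (n + 1)) = u := by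
        apply Fin.ext; exact hu.symm
      rw [hcu, ← hu', h3]
      cases incr <;> simp <;> omega
    · by_cases hup : u.val = p.val + 1
      · have hcu : collapse p u = p := by
          unfold collapse; rw [dif_neg (by omega)]; apply Fin.ext; simp; omega
        have hu' : (⟨p.val + 1, Nat.succ_lt_succ p.isLt⟩ : Fin (n + 1)) = u := by
          apply Fin.ext; exact hup.symm
        rw [hcu, ← hu', h4]
        cases incr <;> simp <;> omega
      · have hlt : u.val - 1 < n := by have := u.isLt; omega
        set j : Fin n := ⟨u.val - 1, hlt⟩ with hj
        have hjp : p.val < j.val := by simp [hj]; omega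
        have hcu : collapse p u = j := by
          unfold collapse; rw [dif_neg (by omega)]
        have hu' : (⟨j.val + 1, Nat.succ_lt_succ j.isLt⟩ : Fin (n + 1)) = u := by
          apply Fin.ext; simp [hj]; omega
        rcases h2 j hjp with ⟨hlt2, heq⟩ | ⟨hlt2, heq⟩
        · rw [hcu, ← hu', heq, if_pos (le_of_lt hlt2)]
        · rw [hcu, ← hu', heq, if_neg (by omega)]
          omega
  -- the key adjacency transfer
  have key : ∀ u v : Fin (n + 1), (incGraph (n + 1) σ').Adj u v →
      collapse p u = collapse p v ∨ (incGraph n σ).Adj (collapse p u) (collapse p v) := by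
    have onedir : ∀ u v : Fin (n + 1),
        (u.val + 1 = v.val ∨ (σ' u).val + 1 = (σ' v).val) →
        collapse p u = collapse p v ∨ (incGraph n σ).Adj (collapse p u) (collapse p v) := by
      intro u v hrel
      rcases hrel with hrel | hrel
      · rcases pos_step p u v hrel with heq | hstep
        · exact Or.inl heq
        · right
          rw [incGraph, SimpleGraph.fromRel_adj]
          exact ⟨by intro hc; rw [hc] at hstep; omega, Or.inl (Or.inl hstep)⟩
      · have ha := hval u
        have hb := hval v
        set a := (σ' u).val
        set b := (σ' v).val
        have hcases : (σ (collapse p u)).val = (σ (collapse p v)).val ∨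
            (σ (collapse p u)).val + 1 = (σ (collapse p v)).val := by
          rw [ha, hb]; split_ifs <;> omega
        rcases hcases with heq | hstep
        · left
          exact σ.injective (Fin.ext heq)
        · right
          rw [incGraph, SimpleGraph.fromRel_adj]
          refine ⟨?_, Or.inl (Or.inr hstep)⟩
          intro hc; rw [hc] at hstep; omega
    intro u v hadj
    rw [incGraph, SimpleGraph.fromRel_adj] at hadj
    rcases hadj.2 with hrel | hrel
    · exact onedir u v hrel
    · rcases onedir v u hrel with heq | hadj'
      · exact Or.inl heq.symm
      · exact Or.inr hadj'.symm
  -- treewidth argument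
  set S := {m : ℕ | ∃ d : TreeDecomp (incGraph n σ), ∀ i, (d.bag i).card ≤ m + 1} with hS
  have hSne : S.Nonempty := by
    refine ⟨n, ⟨⟨Unit, ⊥, ?_, SimpleGraph.isAcyclic_bot, fun _ => Finset.univ,
      fun v => ⟨(), Finset.mem_univ v⟩, fun u v _ => ⟨(), Finset.mem_univ u, Finset.mem_univ v⟩,
      fun v i j _ _ _ _ x _ => Finset.mem_univ v⟩, ?_⟩⟩
    · constructor
      intro u v; cases u; cases v; rfl
    · intro i
      simp only [Finset.card_univ, Fintype.card_fin]
      omega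
  have hmem : treewidth (incGraph n σ) ∈ S := Nat.sInf_mem hSne
  obtain ⟨d, hd⟩ := hmem
  set m := treewidth (incGraph n σ)
  -- new bags
  set bag' : d.ι → Finset (Fin (n + 1)) :=
    fun i => (d.bag i).image (emb0 p) ∪ (d.bag i).image (emb1 p) with hbag'
  have hmem' : ∀ i (j : Fin (n + 1)), j ∈ bag' i ↔ collapse p j ∈ d.bag i := by
    intro i j
    constructor
    · intro hj
      rw [hbag'] at hj
      simp only [Finset.mem_union, Finset.mem_image] at hj
      rcases hj with ⟨x, hx, hxe⟩ | ⟨x, hx, hxe⟩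
      · rwa [← hxe, collapse_emb0]
      · rwa [← hxe, collapse_emb1]
    · intro hj
      rw [hbag']
      simp only [Finset.mem_union, Finset.mem_image]
      rcases emb_collapse p j with he | he
      · exact Or.inl ⟨collapse p j, hj, he⟩
      · exact Or.inr ⟨collapse p j, hj, he⟩
  have hcard : ∀ i, (bag' i).card ≤ m + 2 := by
    intro i
    have hsub : bag' i ⊆ insert ⟨p.val + 1, Nat.succ_lt_succ p.isLt⟩ ((d.bag i).image (emb0 p)) := by
      intro j hj
      rw [hbag'] at hj
      simp only [Finset.mem_union, Finset.mem_image] at hj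
      simp only [Finset.mem_insert, Finset.mem_image]
      rcases hj with ⟨x, hx, hxe⟩ | ⟨x, hx, hxe⟩
      · exact Or.inr ⟨x, hx, hxe⟩
      · rcases emb1_val p x with he | he
        · exact Or.inr ⟨x, hx, by rw [← he, hxe]⟩
        · exact Or.inl (by rw [← hxe, he])
    calc (bag' i).card ≤ _ := Finset.card_le_card hsub
      _ ≤ ((d.bag i).image (emb0 p)).card + 1 := Finset.card_insert_le _ _
      _ ≤ (d.bag i).card + 1 := by
          have := Finset.card_image_le (s := d.bag i) (f := emb0 p)
          omega
      _ ≤ m + 2 := by have := hd i; omega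
  have hd' : treewidth (incGraph n σ) + 1 ∈
      {k : ℕ | ∃ d' : TreeDecomp (incGraph (n + 1) σ'), ∀ i, (d'.bag i).card ≤ k + 1} := by
    refine ⟨⟨d.ι, d.T, d.conn, d.acyc, bag', ?_, ?_, ?_⟩, ?_⟩
    · intro v
      obtain ⟨i, hi⟩ := d.mem_vert (collapse p v)
      exact ⟨i, (hmem' i v).mpr hi⟩
    · intro u v hadj
      rcases key u v hadj with heq | hadj'
      · obtain ⟨i, hi⟩ := d.mem_vert (collapse p u)
        exact ⟨i, (hmem' i u).mpr hi, (hmem' i v).mpr (heq ▸ hi)⟩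
      · obtain ⟨i, hi, hj⟩ := d.mem_edge _ _ hadj'
        exact ⟨i, (hmem' i u).mpr hi, (hmem' i v).mpr hj⟩
    · intro v i j hvi hvj pa hpa x hx
      exact (hmem' x v).mpr
        (d.coherent (collapse p v) i j ((hmem' i v).mp hvi) ((hmem' j v).mp hvj) pa hpa x hx)
    · exact hcard
  exact Nat.sInf_le hd'
end

section
/- If a graph G on n vertices has a drawing in the plane (or a fixed surface of Euler genus g) with at most C·n crossings for a constant C, where no three edges cross at a common point, then the planarization G' obtained by replacing each crossing with a degree-4 vertex has O(n) vertices, and any tree decomposition of G' of width t yields a tree decomposition of G of width at most 4t + 3. -/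
open Classical in
/-- The two endpoints of an unordered pair, as a `Finset`. -/
noncomputable def sym2Finset {V : Type} (e : Sym2 V) : Finset V :=
  Sym2.lift ⟨fun a b => ({a, b} : Finset V), fun a b => Finset.pair_comm a b⟩ e

lemma mem_sym2Finset {V : Type} {v : V} {e : Sym2 V} :
    v ∈ sym2Finset e ↔ v ∈ e := by
  induction e using Sym2.ind with
  | _ a b => simp [sym2Finset, Sym2.mem_iff, Finset.mem_insert]

lemma card_sym2Finset {V : Type} (e : Sym2 V) : (sym2Finset e).card ≤ 2 := by
  induction e using Sym2.ind with
  | _ a b =>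
    classical
    simpa [sym2Finset] using Finset.card_insert_le a ({b} : Finset V)

/-- In a tree, any vertex of the path from `i` to `j` lies on any walk from `i` to `k`
or on any walk from `k` to `j`. -/
lemma tree_path_split {ι : Type} {T : SimpleGraph ι} (hT : T.IsAcyclic) {i j k : ι}
    (p : T.Walk i j) (hp : p.IsPath) (q : T.Walk i k) (r : T.Walk k j)
    {x : ι} (hx : x ∈ p.support) : x ∈ q.support ∨ x ∈ r.support := by
  classical
  have huniq : (⟨p, hp⟩ : T.Path i j) = (q.append r).toPath := hT.path_unique _ _
  have hpval : p = (q.append r).bypass := congrArg Subtype.val huniq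
  rw [hpval] at hx
  have hx' : x ∈ (q.append r).support := (q.append r).support_bypass_subset hx
  rwa [SimpleGraph.Walk.mem_support_append_iff] at hx'

/-- Key lemma: if `a ∈ bag i`, `b ∈ bag j` and there is a walk from `a` to `b` in `G'`,
then every bag on a tree path from `i` to `j` contains some vertex of that walk. -/
lemma decomp_walk {V' : Type} {G' : SimpleGraph V'} (d : TreeDecomp G')
    {a b : V'} (w : G'.Walk a b) :
    ∀ i j : d.ι, a ∈ d.bag i → b ∈ d.bag j →
      ∀ p : d.T.Walk i j, p.IsPath → ∀ x ∈ p.support, ∃ s ∈ w.support, s ∈ d.bag x := by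
  classical
  induction w with
  | nil =>
    intro i j hai hbj p hp x hx
    exact ⟨_, SimpleGraph.Walk.start_mem_support _, d.coherent _ i j hai hbj p hp x hx⟩
  | @cons a a₂ b hadj w' ih =>
    intro i j hai hbj p hp x hx
    obtain ⟨k, hak, ha₂k⟩ := d.mem_edge a a₂ hadj
    obtain ⟨q⟩ := d.conn i k
    obtain ⟨r⟩ := d.conn k j
    rcases tree_path_split d.acyc p hp q.toPath.val r.toPath.val hx with h | h
    · exact ⟨a, by simp, d.coherent a i k hai hak q.toPath.val q.toPath.prop x h⟩
    · obtain ⟨s, hs, hsb⟩ := ih k j ha₂k hbj r.toPath.val r.toPath.prop x h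
      exact ⟨s, by simp [hs], hsb⟩

/-- Combinatorial abstraction of a drawing of `G` with at most `C·n` crossings (no three
edges crossing at a common point) and its planarization `G'`: the vertex set of `G'` is
`V ⊕ X` where `X` is the set of crossings, each crossing `c` lies on exactly two edges
`f₁ c`, `f₂ c` of `G`, and each edge of `G` is split in `G'` into a path through
exactly the crossings lying on it.  Then `G'` has `O(n)` vertices, and any tree
decomposition of `G'` of width `t` yields one of `G` of width at most `4t + 3`. -/
theorem planarization_card_and_treewidth {V X : Type} [Fintype V] [Fintype X] (C : ℕ)
    (G : SimpleGraph V) (G' : SimpleGraph (V ⊕ X))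
    (hX : Fintype.card X ≤ C * Fintype.card V)
    (f₁ f₂ : X → Sym2 V)
    (hf : ∀ c : X, f₁ c ∈ G.edgeSet ∧ f₂ c ∈ G.edgeSet)
    (hpath : ∀ u v : V, G.Adj u v → ∃ p : G'.Walk (Sum.inl u) (Sum.inl v),
      p.IsPath ∧
      (∀ x ∈ p.support, x = Sum.inl u ∨ x = Sum.inl v ∨
        ∃ c : X, x = Sum.inr c ∧ (f₁ c = s(u, v) ∨ f₂ c = s(u, v))) ∧
      (∀ c : X, (f₁ c = s(u, v) ∨ f₂ c = s(u, v)) → Sum.inr c ∈ p.support)) :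
    Fintype.card (V ⊕ X) ≤ (C + 1) * Fintype.card V ∧
    ∀ t : ℕ, (∃ d : TreeDecomp G', ∀ i, (d.bag i).card ≤ t + 1) →
      ∃ d : TreeDecomp G, ∀ i, (d.bag i).card ≤ (4 * t + 3) + 1 := by
  classical
  constructor
  · rw [Fintype.card_sum]
    calc Fintype.card V + Fintype.card X ≤ Fintype.card V + C * Fintype.card V := by omega
      _ = (C + 1) * Fintype.card V := by ring
  intro t ⟨d, hd⟩
  -- the expansion of a vertex of `G'` to a set of vertices of `G`
  set expand : V ⊕ X → Finset V := fun y =>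
    match y with
    | Sum.inl v => {v}
    | Sum.inr c => sym2Finset (f₁ c) ∪ sym2Finset (f₂ c) with hexpand
  have hexpand_card : ∀ y, (expand y).card ≤ 4 := by
    rintro (v | c)
    · simp [hexpand]
    · calc (expand (Sum.inr c)).card ≤ (sym2Finset (f₁ c)).card + (sym2Finset (f₂ c)).card :=
          Finset.card_union_le _ _
        _ ≤ 4 := by have := card_sym2Finset (f₁ c); have := card_sym2Finset (f₂ c); omega
  -- membership facts
  have hmem_inl : ∀ v : V, v ∈ expand (Sum.inl v) := by simp [hexpand]
  have hmem_inr : ∀ (v : V) (c : X), (v ∈ f₁ c ∨ v ∈ f₂ c) → v ∈ expand (Sum.inr c) := by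
    intro v c h
    simp only [hexpand, Finset.mem_union, mem_sym2Finset]
    exact h
  -- every "source" of `v` is connected to `Sum.inl v` inside the sources of `v`
  have hconn : ∀ (v : V) (y : V ⊕ X), v ∈ expand y →
      ∃ w : G'.Walk (Sum.inl v) y, ∀ z ∈ w.support, v ∈ expand z := by
    rintro v (v' | c) hv
    · have : v = v' := by simpa [hexpand] using hv
      subst this
      exact ⟨SimpleGraph.Walk.nil, by simp [hmem_inl]⟩
    · have hv' : v ∈ f₁ c ∨ v ∈ f₂ c := by
        simpa [hexpand, mem_sym2Finset] using hv
      -- pick the edge of `G` through `c` containing `v`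
      obtain ⟨e, he, hve, hec⟩ : ∃ e : Sym2 V, e ∈ G.edgeSet ∧ v ∈ e ∧
          (f₁ c = e ∨ f₂ c = e) := by
        rcases hv' with h | h
        · exact ⟨f₁ c, (hf c).1, h, Or.inl rfl⟩
        · exact ⟨f₂ c, (hf c).2, h, Or.inr rfl⟩
      obtain ⟨u, heq⟩ := Sym2.mem_iff_exists.mp hve
      subst heq
      have hadj : G.Adj v u := he
      obtain ⟨p, hp, hsupp, hcross⟩ := hpath v u hadj
      have hcp : Sum.inr c ∈ p.support := hcross c hec
      refine ⟨p.takeUntil _ hcp, ?_⟩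
      intro z hz
      have hz' : z ∈ p.support := p.support_takeUntil_subset hcp hz
      rcases hsupp z hz' with h | h | ⟨c', hc', hfc'⟩
      · subst h; exact hmem_inl v
      · -- `Sum.inl u` cannot be in the `takeUntil` part
        exfalso
        subst h
        have hnd := hp.support_nodup
        rw [← p.take_spec hcp, SimpleGraph.Walk.support_append] at hnd
        have hdisj := List.disjoint_of_nodup_append hnd
        have hmem2 : Sum.inl u ∈ (p.dropUntil _ hcp).support.tail := by
          have hend : (Sum.inl u : V ⊕ X) ∈ (p.dropUntil _ hcp).support :=
            SimpleGraph.Walk.end_mem_support _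
          rw [SimpleGraph.Walk.support_eq_cons] at hend
          rcases List.mem_cons.mp hend with h | h
          · exact absurd h.symm (by simp)
          · exact h
        exact hdisj hz hmem2
      · subst hc'
        refine hmem_inr v c' ?_
        rcases hfc' with h | h
        · exact Or.inl (by rw [h]; simp)
        · exact Or.inr (by rw [h]; simp)
  -- build the tree decomposition of `G`
  refine ⟨⟨d.ι, d.T, d.conn, d.acyc, fun i => (d.bag i).biUnion expand, ?_, ?_, ?_⟩, ?_⟩
  · -- mem_vert
    intro v
    obtain ⟨i, hi⟩ := d.mem_vert (Sum.inl v)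
    exact ⟨i, Finset.mem_biUnion.mpr ⟨Sum.inl v, hi, hmem_inl v⟩⟩
  · -- mem_edge
    intro u v huv
    obtain ⟨p, hp, hsupp, hcross⟩ := hpath u v huv
    cases p with
    | nil => exact absurd huv (G.irrefl)
    | @cons _ y _ hadj q =>
      have hy : y ∈ (SimpleGraph.Walk.cons hadj q).support := by simp
      rcases hsupp y hy with h | h | ⟨c, hc, hfc⟩
      · exact absurd (h ▸ hadj) (G'.irrefl)
      · subst h
        obtain ⟨i, hui, hvi⟩ := d.mem_edge _ _ hadj
        exact ⟨i, Finset.mem_biUnion.mpr ⟨_, hui, hmem_inl u⟩,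
          Finset.mem_biUnion.mpr ⟨_, hvi, hmem_inl v⟩⟩
      · subst hc
        obtain ⟨i, hi⟩ := d.mem_vert (Sum.inr c)
        refine ⟨i, Finset.mem_biUnion.mpr ⟨_, hi, hmem_inr u c ?_⟩,
          Finset.mem_biUnion.mpr ⟨_, hi, hmem_inr v c ?_⟩⟩
        · rcases hfc with h | h
          · exact Or.inl (by rw [h]; simp)
          · exact Or.inr (by rw [h]; simp)
        · rcases hfc with h | h
          · exact Or.inl (by rw [h]; simp)
          · exact Or.inr (by rw [h]; simp)
  · -- coherent
    intro v i j hvi hvj p hp x hx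
    obtain ⟨s, hsi, hvs⟩ := Finset.mem_biUnion.mp hvi
    obtain ⟨s', hsj, hvs'⟩ := Finset.mem_biUnion.mp hvj
    obtain ⟨w₁, hw₁⟩ := hconn v s hvs
    obtain ⟨w₂, hw₂⟩ := hconn v s' hvs'
    have hgood : ∀ z ∈ (w₁.reverse.append w₂).support, v ∈ expand z := by
      intro z hz
      rw [SimpleGraph.Walk.mem_support_append_iff] at hz
      rcases hz with h | h
      · exact hw₁ z (by simpa using h)
      · exact hw₂ z h
    obtain ⟨s'', hs''mem, hs''bag⟩ :=
      decomp_walk d (w₁.reverse.append w₂) i j hsi hsj p hp x hx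
    exact Finset.mem_biUnion.mpr ⟨s'', hs''bag, hgood s'' hs''mem⟩
  · -- card bound
    intro i
    calc ((d.bag i).biUnion expand).card ≤ (d.bag i).card * 4 :=
        Finset.card_biUnion_le_card_mul _ _ _ (fun a _ => hexpand_card a)
      _ ≤ (t + 1) * 4 := Nat.mul_le_mul_right 4 (hd i)
      _ = (4 * t + 3) + 1 := by ring
end

section
/- Let G = (V,E) be a graph with a linear order ≤ on V, and suppose E is partitioned into s sets E_1,...,E_s, each non-overlapping with respect to ≤. Then in the circular-arc drawing of G where vertices are placed on a line in the order ≤ and each edge is drawn as a semicircular arc above the line, each edge of E_j crosses no edge of E_j and at most 2 edges of each E_{j'} with j' ≠ j; hence every edge participates in at most 2(s-1) crossings and the total number of crossings is at most (s-1)·|E|. -/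
/-- Two semicircular arcs above the line (for a vertex set linearly ordered on the line)
cross iff their endpoint pairs strictly interleave. `Crosses e f` expresses one of the two
symmetric interleaving patterns. -/
def Crosses {V : Type} [LinearOrder V] (e f : Sym2 V) : Prop :=
  ∃ a b c d : V, e = s(a, b) ∧ f = s(c, d) ∧ a < c ∧ c < b ∧ b < d

/-- A set of edges is non-overlapping w.r.t. the linear order if for any two distinct
edges, every endpoint of one is ≤ every endpoint of the other. -/
def NonOverlapping {V : Type} [LinearOrder V] (F : Set (Sym2 V)) : Prop :=
  ∀ e ∈ F, ∀ f ∈ F, e ≠ f →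
    (∀ x ∈ e, ∀ y ∈ f, x ≤ y) ∨ (∀ x ∈ f, ∀ y ∈ e, x ≤ y)

section Aux

variable {V : Type} [LinearOrder V]

/-- Normalization of the first edge in a crossing. -/
lemma crosses_iff {a b : V} (hab : a < b) (f : Sym2 V) :
    Crosses s(a, b) f ↔ ∃ c d : V, f = s(c, d) ∧ a < c ∧ c < b ∧ b < d := by
  constructor
  · rintro ⟨a', b', c, d, he, hf, h1, h2, h3⟩
    rw [Sym2.eq_iff] at he
    rcases he with ⟨rfl, rfl⟩ | ⟨rfl, rfl⟩
    · exact ⟨c, d, hf, h1, h2, h3⟩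
    · exact absurd (h1.trans h2) (by simpa using hab.le)
  · rintro ⟨c, d, hf, h1, h2, h3⟩
    exact ⟨a, b, c, d, rfl, hf, h1, h2, h3⟩

/-- Normalization of the second edge in a crossing. -/
lemma crosses_iff' {a b : V} (hab : a < b) (f : Sym2 V) :
    Crosses f s(a, b) ↔ ∃ c d : V, f = s(c, d) ∧ c < a ∧ a < d ∧ d < b := by
  constructor
  · rintro ⟨x, y, z, w, hf, he, h1, h2, h3⟩
    rw [Sym2.eq_iff] at he
    rcases he with ⟨rfl, rfl⟩ | ⟨rfl, rfl⟩
    · exact ⟨x, y, hf, h1, h2, h3⟩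
    · exact absurd (h2.trans h3) (by simpa using hab.le)
  · rintro ⟨c, d, hf, h1, h2, h3⟩
    exact ⟨c, d, a, b, hf, rfl, h1, h2, h3⟩

/-- Within a non-overlapping family there are no crossings. -/
lemma no_cross_within {F : Set (Sym2 V)} (hF : NonOverlapping F)
    {e f : Sym2 V} (he : e ∈ F) (hf : f ∈ F) : ¬ Crosses e f := by
  rintro ⟨a, b, c, d, rfl, rfl, h1, h2, h3⟩
  by_cases hef : s(a, b) = s(c, d)
  · rw [Sym2.eq_iff] at hef
    rcases hef with ⟨rfl, rfl⟩ | ⟨rfl, rfl⟩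
    · exact lt_irrefl a h1
    · exact lt_irrefl a (h1.trans (h2.trans h3))
  · rcases hF _ he _ hf hef with h | h
    · exact absurd (h b (by simp) c (by simp)) (not_le.2 h2)
    · exact absurd (h d (by simp) b (by simp)) (not_le.2 h3)

/-- At most one edge of a non-overlapping family crosses `s(a,b)` "to the right". -/
lemma right_subsingleton {F : Set (Sym2 V)} (hF : NonOverlapping F) (a b : V) :
    Set.Subsingleton {f ∈ F | ∃ c d : V, f = s(c, d) ∧ a < c ∧ c < b ∧ b < d} := by
  rintro f ⟨hfF, c, d, rfl, h1, h2, h3⟩ g ⟨hgF, c', d', rfl, h1', h2', h3'⟩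
  by_contra hne
  rcases hF _ hfF _ hgF hne with h | h
  · exact absurd (h d (by simp) c' (by simp)) (not_le.2 (h2'.trans h3))
  · exact absurd (h d' (by simp) c (by simp)) (not_le.2 (h2.trans h3'))

/-- At most one edge of a non-overlapping family crosses `s(a,b)` "to the left". -/
lemma left_subsingleton {F : Set (Sym2 V)} (hF : NonOverlapping F) (a b : V) :
    Set.Subsingleton {f ∈ F | ∃ c d : V, f = s(c, d) ∧ c < a ∧ a < d ∧ d < b} := by
  rintro f ⟨hfF, c, d, rfl, h1, h2, h3⟩ g ⟨hgF, c', d', rfl, h1', h2', h3'⟩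
  by_contra hne
  rcases hF _ hfF _ hgF hne with h | h
  · exact absurd (h d (by simp) c' (by simp)) (not_le.2 (h1'.trans h2))
  · exact absurd (h d' (by simp) c (by simp)) (not_le.2 (h1.trans h2'))

lemma ncard_biUnion_le' {α β : Type*} (A : Finset α) (g : α → Set β)
    (hg : ∀ a, (g a).Finite) :
    (⋃ a ∈ A, g a).ncard ≤ ∑ a ∈ A, (g a).ncard := by
  classical
  have hU : (⋃ a ∈ A, g a) = ↑(A.biUnion fun a => (hg a).toFinset) := by
    ext x; simp
  rw [hU, Set.ncard_coe_finset]
  refine (Finset.card_biUnion_le).trans ?_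
  refine Finset.sum_le_sum fun a _ => ?_
  rw [Set.ncard_eq_toFinset_card _ (hg a)]

lemma edge_exists_lt {V : Type} [LinearOrder V] {G : SimpleGraph V} {e : Sym2 V}
    (he : e ∈ G.edgeSet) : ∃ a b : V, a < b ∧ e = s(a, b) := by
  induction e with
  | h x y =>
    have hxy : x ≠ y := G.ne_of_adj he
    rcases hxy.lt_or_gt with h | h
    · exact ⟨x, y, h, rfl⟩
    · exact ⟨y, x, h, Sym2.eq_swap⟩

end Aux

/-- If the edges of `G` are partitioned into `s` sets, each non-overlapping w.r.t. a
linear order on the vertices, then in the circular-arc drawing each edge of `E j` crosses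
no edge of `E j` and at most 2 edges of each other class; hence each edge participates in
at most `2(s-1)` crossings and the total number of crossings is at most `(s-1)·|E|`. -/
theorem nonoverlapping_partition_crossings {V : Type} [LinearOrder V] [Fintype V]
    (G : SimpleGraph V) (s : ℕ) (E : Fin s → Set (Sym2 V))
    (hcover : G.edgeSet = ⋃ j, E j)
    (hdisj : ∀ j j' : Fin s, j ≠ j' → Disjoint (E j) (E j'))
    (hno : ∀ j, NonOverlapping (E j)) :
    (∀ j, ∀ e ∈ E j,
      (∀ f ∈ E j, ¬ Crosses e f ∧ ¬ Crosses f e) ∧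
      (∀ j', j' ≠ j → ({f ∈ E j' | Crosses e f ∨ Crosses f e}).ncard ≤ 2) ∧
      ({f ∈ G.edgeSet | Crosses e f ∨ Crosses f e}).ncard ≤ 2 * (s - 1)) ∧
    ({p : Sym2 V × Sym2 V |
        p.1 ∈ G.edgeSet ∧ p.2 ∈ G.edgeSet ∧ Crosses p.1 p.2}).ncard ≤
      (s - 1) * G.edgeSet.ncard := by
  classical
  have hEsub : ∀ j, E j ⊆ G.edgeSet := fun j => hcover ▸ Set.subset_iUnion E j
  -- the per-class bound, valid for every class
  have hclass : ∀ j, ∀ e ∈ E j, ∀ j' : Fin s,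
      ({f ∈ E j' | Crosses e f ∨ Crosses f e}).ncard ≤ if j' = j then 0 else 2 := by
    intro j e he j'
    obtain ⟨a, b, hab, rfl⟩ := edge_exists_lt (hEsub j he)
    by_cases hjj : j' = j
    · subst hjj
      have hempty : {f ∈ E j' | Crosses s(a, b) f ∨ Crosses f s(a, b)} = ∅ := by
        ext f
        simp only [Set.mem_setOf_eq, Set.mem_empty_iff_false, iff_false, not_and, not_or]
        intro hf
        exact ⟨no_cross_within (hno j') he hf, no_cross_within (hno j') hf he⟩
      rw [if_pos rfl, hempty, Set.ncard_empty]
    · rw [if_neg hjj]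
      have hsub : {f ∈ E j' | Crosses s(a, b) f ∨ Crosses f s(a, b)} ⊆
          {f ∈ E j' | ∃ c d : V, f = s(c, d) ∧ a < c ∧ c < b ∧ b < d} ∪
          {f ∈ E j' | ∃ c d : V, f = s(c, d) ∧ c < a ∧ a < d ∧ d < b} := by
        rintro f ⟨hf, hc | hc⟩
        · exact Or.inl ⟨hf, (crosses_iff hab f).1 hc⟩
        · exact Or.inr ⟨hf, (crosses_iff' hab f).1 hc⟩
      refine (Set.ncard_le_ncard hsub (Set.toFinite _)).trans
        ((Set.ncard_union_le _ _).trans ?_)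
      have h1 : ({f ∈ E j' | ∃ c d : V, f = s(c, d) ∧ a < c ∧ c < b ∧ b < d}).ncard ≤ 1 :=
        (Set.ncard_le_one (Set.toFinite _)).2
          (fun x hx y hy => right_subsingleton (hno j') a b hx hy)
      have h2 : ({f ∈ E j' | ∃ c d : V, f = s(c, d) ∧ c < a ∧ a < d ∧ d < b}).ncard ≤ 1 :=
        (Set.ncard_le_one (Set.toFinite _)).2
          (fun x hx y hy => left_subsingleton (hno j') a b hx hy)
      omega
  have hsumite : ∀ (j : Fin s) (k : ℕ),
      ∑ j' : Fin s, (if j' = j then 0 else k) = k * (s - 1) := by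
    intro j k
    rw [← Finset.sum_erase_add _ _ (Finset.mem_univ j),
      Finset.sum_congr rfl (fun x hx => if_neg (Finset.mem_erase.1 hx).1)]
    simp [Finset.card_erase_of_mem, mul_comm]
  constructor
  · intro j e he
    refine ⟨fun f hf => ⟨no_cross_within (hno j) he hf, no_cross_within (hno j) hf he⟩,
      fun j' hj' => by simpa [if_neg hj'] using hclass j e he j', ?_⟩
    have hsub : {f ∈ G.edgeSet | Crosses e f ∨ Crosses f e} ⊆
        ⋃ j' ∈ (Finset.univ : Finset (Fin s)),
          {f ∈ E j' | Crosses e f ∨ Crosses f e} := by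
      rintro f ⟨hf, hc⟩
      rw [hcover] at hf
      obtain ⟨j', hj'⟩ := Set.mem_iUnion.1 hf
      exact Set.mem_biUnion (Finset.mem_univ j') ⟨hj', hc⟩
    refine ((Set.ncard_le_ncard hsub (Set.toFinite _)).trans
      ((ncard_biUnion_le' _ _ (fun _ => Set.toFinite _)).trans ?_))
    calc ∑ j' : Fin s, ({f ∈ E j' | Crosses e f ∨ Crosses f e}).ncard
        ≤ ∑ j' : Fin s, (if j' = j then 0 else 2) :=
          Finset.sum_le_sum (fun j' _ => hclass j e he j')
      _ = 2 * (s - 1) := hsumite j 2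
  · -- total count
    have hfiber : ∀ e ∈ G.edgeSet, ({f ∈ G.edgeSet | Crosses e f}).ncard ≤ s - 1 := by
      intro e he
      obtain ⟨j, hj⟩ := Set.mem_iUnion.1 (hcover ▸ he)
      obtain ⟨a, b, hab, rfl⟩ := edge_exists_lt he
      have hsub : {f ∈ G.edgeSet | Crosses s(a, b) f} ⊆
          ⋃ j' ∈ (Finset.univ : Finset (Fin s)),
            {f ∈ E j' | ∃ c d : V, f = s(c, d) ∧ a < c ∧ c < b ∧ b < d} := by
        rintro f ⟨hf, hc⟩
        rw [hcover] at hf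
        obtain ⟨j', hj'⟩ := Set.mem_iUnion.1 hf
        exact Set.mem_biUnion (Finset.mem_univ j') ⟨hj', (crosses_iff hab f).1 hc⟩
      refine ((Set.ncard_le_ncard hsub (Set.toFinite _)).trans
        ((ncard_biUnion_le' _ _ (fun _ => Set.toFinite _)).trans ?_))
      calc ∑ j' : Fin s,
            ({f ∈ E j' | ∃ c d : V, f = s(c, d) ∧ a < c ∧ c < b ∧ b < d}).ncard
          ≤ ∑ j' : Fin s, (if j' = j then 0 else 1) := by
            refine Finset.sum_le_sum (fun j' _ => ?_)
            by_cases hjj : j' = j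
            · subst hjj
              rw [if_pos rfl, Nat.le_zero, Set.ncard_eq_zero (Set.toFinite _)]
              ext f
              simp only [Set.mem_setOf_eq, Set.mem_empty_iff_false, iff_false, not_and]
              intro hf hpat
              exact no_cross_within (hno j') hj hf ((crosses_iff hab f).2 hpat)
            · rw [if_neg hjj]
              exact (Set.ncard_le_one (Set.toFinite _)).2
                (fun x hx y hy => right_subsingleton (hno j') a b hx hy)
        _ = 1 * (s - 1) := hsumite j 1
        _ = s - 1 := one_mul _
    have hsub : {p : Sym2 V × Sym2 V |
        p.1 ∈ G.edgeSet ∧ p.2 ∈ G.edgeSet ∧ Crosses p.1 p.2} ⊆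
        ⋃ e ∈ G.edgeSet.toFinite.toFinset,
          ({e} ×ˢ {f ∈ G.edgeSet | Crosses e f}) := by
      rintro ⟨e, f⟩ ⟨h1, h2, h3⟩
      exact Set.mem_biUnion (G.edgeSet.toFinite.mem_toFinset.2 h1)
        ⟨rfl, h2, h3⟩
    refine ((Set.ncard_le_ncard hsub (Set.toFinite _)).trans
      ((ncard_biUnion_le' _ _ (fun _ => Set.toFinite _)).trans ?_))
    have hprod : ∀ e : Sym2 V,
        (({e} : Set (Sym2 V)) ×ˢ {f ∈ G.edgeSet | Crosses e f}).ncard =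
          ({f ∈ G.edgeSet | Crosses e f}).ncard := by
      intro e
      rw [Set.singleton_prod]
      exact Set.ncard_image_of_injective _ (fun x y h => congrArg Prod.snd h)
    calc ∑ e ∈ G.edgeSet.toFinite.toFinset,
          (({e} : Set (Sym2 V)) ×ˢ {f ∈ G.edgeSet | Crosses e f}).ncard
        ≤ ∑ _e ∈ G.edgeSet.toFinite.toFinset, (s - 1) := by
          refine Finset.sum_le_sum (fun e heF => ?_)
          rw [hprod e]
          exact hfiber e (G.edgeSet.toFinite.mem_toFinset.1 heF)
      _ = (s - 1) * G.edgeSet.ncard := by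
          rw [Finset.sum_const, smul_eq_mul,
            ← Set.ncard_eq_toFinset_card _ G.edgeSet.toFinite, mul_comm]
end

section
/- The m × m grid graph has tree-width exactly m (for m ≥ 2). -/
/-- The `m × m` grid graph: `(i,j)` and `(i',j')` are adjacent iff
`|i-i'| + |j-j'| = 1`. -/
def gridGraph (m : ℕ) : SimpleGraph (Fin m × Fin m) :=
  SimpleGraph.fromRel (fun p q =>
    (p.1 = q.1 ∧ p.2.val + 1 = q.2.val) ∨ (p.2 = q.2 ∧ p.1.val + 1 = q.1.val))

open Finset

namespace SimpleGraph

variable {V W : Type*} {G : SimpleGraph V}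

def ReachableIn (G : SimpleGraph V) (s : Set V) (u v : V) : Prop :=
  ∃ p : G.Walk u v, ∀ x ∈ p.support, x ∈ s

def PreconnectedOn (G : SimpleGraph V) (s : Set V) : Prop :=
  ∀ u ∈ s, ∀ v ∈ s, G.ReachableIn s u v

namespace ReachableIn

variable {s t : Set V} {u v w : V}

lemma mono (hst : s ⊆ t) (h : G.ReachableIn s u v) : G.ReachableIn t u v :=
  let ⟨p, hp⟩ := h
  ⟨p, fun x hx => hst (hp x hx)⟩

lemma trans (huv : G.ReachableIn s u v) (hvw : G.ReachableIn s v w) : G.ReachableIn s u w := by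
  obtain ⟨p, hp⟩ := huv
  obtain ⟨q, hq⟩ := hvw
  refine ⟨p.append q, fun x hx => ?_⟩
  rcases Walk.mem_support_append_iff p q |>.1 hx with hx | hx
  exacts [hp x hx, hq x hx]

lemma exists_isPath [DecidableEq V] (h : G.ReachableIn s u v) :
    ∃ p : G.Walk u v, p.IsPath ∧ ∀ x ∈ p.support, x ∈ s :=
  let ⟨p, hp⟩ := h
  ⟨p.bypass, p.bypass_isPath, fun x hx => hp x (p.support_bypass_subset_support hx)⟩

end ReachableIn

lemma PreconnectedOn.union {s t : Set V} (hs : G.PreconnectedOn s) (ht : G.PreconnectedOn t)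
    (hst : (s ∩ t).Nonempty) : G.PreconnectedOn (s ∪ t) := by
  obtain ⟨w, hws, hwt⟩ := hst
  have to_w : ∀ u ∈ s ∪ t, G.ReachableIn (s ∪ t) u w := by
    rintro u (hu | hu)
    exacts [(hs u hu w hws).mono Set.subset_union_left, (ht u hu w hwt).mono Set.subset_union_right]
  have from_w : ∀ v ∈ s ∪ t, G.ReachableIn (s ∪ t) w v := by
    rintro v (hv | hv)
    exacts [(hs w hws v hv).mono Set.subset_union_left, (ht w hwt v hv).mono Set.subset_union_right]
  exact fun u hu v hv => (to_w u hu).trans (from_w v hv)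

lemma Preconnected.preconnectedOn_range {H : SimpleGraph W} (hG : G.Preconnected) (f : G →g H) :
    H.PreconnectedOn (Set.range f) := by
  rintro _ ⟨u, rfl⟩ _ ⟨v, rfl⟩
  obtain ⟨p⟩ := hG u v
  refine ⟨p.map f, fun x hx => ?_⟩
  rw [Walk.support_map, List.mem_map] at hx
  obtain ⟨y, -, rfl⟩ := hx
  exact ⟨y, rfl⟩

def Touches (G : SimpleGraph V) (A B : Set V) : Prop :=
  (A ∩ B).Nonempty ∨ ∃ u ∈ A, ∃ v ∈ B, G.Adj u v

lemma Touches.symm {A B : Set V} : G.Touches A B → G.Touches B A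
  | .inl h => .inl (Set.inter_comm A B ▸ h)
  | .inr ⟨u, hu, v, hv, huv⟩ => .inr ⟨v, hv, u, hu, huv.symm⟩

namespace IsAcyclic

variable {ι : Type*} {T : SimpleGraph ι}

lemma preconnectedOn_inter (hT : T.IsAcyclic) {A B : Set ι}
    (hA : T.PreconnectedOn A) (hB : T.PreconnectedOn B) : T.PreconnectedOn (A ∩ B) := by
  classical
  intro u hu v hv
  obtain ⟨p, hp, hpA⟩ := (hA u hu.1 v hv.1).exists_isPath
  obtain ⟨q, hq, hqB⟩ := (hB u hu.2 v hv.2).exists_isPath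
  obtain rfl : p = q := Subtype.mk.inj <| (hT.subsingleton_path u v).elim ⟨p, hp⟩ ⟨q, hq⟩
  exact ⟨p, fun x hx => ⟨hpA x hx, hqB x hx⟩⟩

lemma helly_three (hT : T.IsAcyclic) {A B C : Set ι}
    (hA : T.PreconnectedOn A) (hB : T.PreconnectedOn B) (hC : T.PreconnectedOn C)
    (hAB : (A ∩ B).Nonempty) (hAC : (A ∩ C).Nonempty) (hBC : (B ∩ C).Nonempty) :
    (A ∩ B ∩ C).Nonempty := by
  classical
  obtain ⟨x, hxA, hxB⟩ := hAB
  obtain ⟨a, haA, haC⟩ := hAC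
  obtain ⟨b, hbB, hbC⟩ := hBC
  by_cases haB : a ∈ B
  · exact ⟨a, ⟨haA, haB⟩, haC⟩
  obtain ⟨r, hr, hrC⟩ := (hC a haC b hbC).exists_isPath
  -- `r` is the unique path from `a` to `b`, so it runs inside the walk `a ⇝ x ⇝ b` through `A ∪ B`.
  have hrAB : ∀ y ∈ r.support, y ∈ A ∪ B := by
    obtain ⟨p, hpA⟩ := hA a haA x hxA
    obtain ⟨q, hqB⟩ := hB x hxB b hbB
    obtain ⟨pq, hpq, hpqAB⟩ := (ReachableIn.trans (s := A ∪ B)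
      ⟨p, fun y hy => Or.inl (hpA y hy)⟩ ⟨q, fun y hy => Or.inr (hqB y hy)⟩).exists_isPath
    obtain rfl : r = pq := Subtype.mk.inj <| (hT.subsingleton_path a b).elim ⟨r, hr⟩ ⟨pq, hpq⟩
    exact hpqAB
  -- `r` steps from `d.fst ∈ A \ B` to `d.snd ∈ B`. The path from `x` to `d.snd` inside `B` avoids
  -- `d.fst`, so the tree path from `x` to `d.fst` inside `A` ends with that step.
  obtain ⟨d, hd, hyB, hzB⟩ := r.exists_boundary_dart Bᶜ haB (not_not.2 hbB)
  have hyA : d.fst ∈ A := (hrAB _ (r.dart_fst_mem_support_of_mem_darts hd)).resolve_right hyB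
  obtain ⟨p, hp, hpA⟩ := (hA x hxA d.fst hyA).exists_isPath
  obtain ⟨q, hq, hqB⟩ := (hB x hxB d.snd (not_not.1 hzB)).exists_isPath
  have hzp := hT.mem_support_of_ne_mem_support_of_adj_of_isPath hp hq d.adj
    fun h => hyB (hqB _ h)
  exact ⟨d.snd, ⟨hpA _ hzp, not_not.1 hzB⟩, hrC _ (r.dart_snd_mem_support_of_mem_darts hd)⟩

lemma helly (hT : T.IsAcyclic) {α : Type*} (s : Finset α) (hs : s.Nonempty) (F : α → Set ι)
    (hF : ∀ a ∈ s, T.PreconnectedOn (F a)) (hpair : ∀ a ∈ s, ∀ b ∈ s, (F a ∩ F b).Nonempty) :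
    ∃ t, ∀ a ∈ s, t ∈ F a := by
  induction hs using Finset.Nonempty.cons_induction generalizing F with
  | singleton a =>
    obtain ⟨t, ht, -⟩ := hpair a (mem_singleton_self a) a (mem_singleton_self a)
    exact ⟨t, fun b hb => (mem_singleton.1 hb) ▸ ht⟩
  | cons a s has hs ih =>
    simp only [mem_cons, forall_eq_or_imp] at hF hpair
    -- Replace every `F b` by `F a ∩ F b`; these still pairwise meet by `helly_three`.
    obtain ⟨t, ht⟩ := ih (fun b => F a ∩ F b)
      (fun b hb => hT.preconnectedOn_inter hF.1 (hF.2 b hb))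
      (fun b hb c hc => by
        rw [← Set.inter_inter_distrib_left, ← Set.inter_assoc]
        exact hT.helly_three hF.1 (hF.2 b hb) (hF.2 c hc) (hpair.1.2 b hb) (hpair.1.2 c hc)
          ((hpair.2 b hb).2 c hc))
    obtain ⟨b, hb⟩ := hs
    refine ⟨t, ?_⟩
    simp only [mem_cons, forall_eq_or_imp]
    exact ⟨(ht b hb).1, fun c hc => (ht c hc).2⟩

end IsAcyclic

lemma pathGraph_mem_support_of_between {n : ℕ} {a b : Fin n} (p : (pathGraph n).Walk a b)
    {c : Fin n} (h₁ : min a.val b.val ≤ c.val) (h₂ : c.val ≤ max a.val b.val) :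
    c ∈ p.support := by
  induction p with
  | nil =>
    simp only [Walk.support_nil, List.mem_cons, Fin.ext_iff, List.not_mem_nil, or_false]
    omega
  | @cons u v b h p ih =>
    rw [pathGraph_adj] at h
    by_cases hc : c = u
    · simp [hc]
    · have := Fin.val_ne_of_ne hc
      simp [ih (by omega) (by omega)]

lemma pathGraph_isPath_support_between {n : ℕ} {a b : Fin n} {p : (pathGraph n).Walk a b}
    (hp : p.IsPath) {c : Fin n} (hc : c ∈ p.support) :
    min a.val b.val ≤ c.val ∧ c.val ≤ max a.val b.val := by
  induction p with
  | nil => simp_all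
  | @cons u v b h p ih =>
    rw [Walk.cons_isPath_iff] at hp
    rw [pathGraph_adj] at h
    have hu : ¬ (min v.val b.val ≤ u.val ∧ u.val ≤ max v.val b.val) :=
      fun ⟨h₁, h₂⟩ => hp.2 (pathGraph_mem_support_of_between p h₁ h₂)
    rcases List.mem_cons.1 hc with rfl | hc
    · omega
    · have := ih hp.1 hc
      omega

lemma pathGraph_isAcyclic (n : ℕ) : (pathGraph n).IsAcyclic := by
  rintro a (_ | ⟨h, p⟩) hc
  · exact hc.not_nil Walk.Nil.nil
  rw [Walk.cons_isCycle_iff] at hc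
  obtain ⟨hp, hedge⟩ := hc
  cases p with
  | nil => exact h.ne rfl
  | @cons u x _ h' q =>
    -- A path between the adjacent vertices `u` and `a` stays in `{u, a}`, so it is the edge itself.
    have hx := pathGraph_isPath_support_between hp (List.mem_cons_of_mem _ q.start_mem_support)
    rw [pathGraph_adj] at h h'
    obtain rfl : x = a := Fin.ext (by omega)
    exact hedge (by simp [Sym2.eq_swap])

def pathGraph.castSuccHom (n : ℕ) : pathGraph (n + 1) →g pathGraph (n + 2) where
  toFun := Fin.castSucc
  map_rel' h := by simpa [pathGraph_adj] using h

end SimpleGraph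

open SimpleGraph

namespace TreeDecomp

variable {V : Type} {G : SimpleGraph V} (d : TreeDecomp G)

lemma reachableIn_setOf_mem_bag {v : V} {i j : d.ι} (hi : v ∈ d.bag i) (hj : v ∈ d.bag j) :
    d.T.ReachableIn {k | v ∈ d.bag k} i j := by
  classical
  obtain ⟨p⟩ := d.conn i j
  exact ⟨p.bypass, d.coherent v i j hi hj p.bypass p.bypass_isPath⟩

def nodesMeeting (X : Set V) : Set d.ι := {i | ∃ v ∈ X, v ∈ d.bag i}

lemma setOf_mem_bag_subset_nodesMeeting {X : Set V} {v : V} (hv : v ∈ X) :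
    {k | v ∈ d.bag k} ⊆ d.nodesMeeting X :=
  fun _ hk => ⟨v, hv, hk⟩

lemma reachableIn_nodesMeeting {X : Set V} {u v : V} (p : G.Walk u v)
    (hp : ∀ x ∈ p.support, x ∈ X) {i j : d.ι} (hi : u ∈ d.bag i) (hj : v ∈ d.bag j) :
    d.T.ReachableIn (d.nodesMeeting X) i j := by
  induction p generalizing i with
  | nil =>
    exact (d.reachableIn_setOf_mem_bag hi hj).mono
      (d.setOf_mem_bag_subset_nodesMeeting (hp _ (Walk.start_mem_support _)))
  | cons h p ih =>
    obtain ⟨k, hk₁, hk₂⟩ := d.mem_edge _ _ h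
    refine ((d.reachableIn_setOf_mem_bag hi hk₁).mono
      (d.setOf_mem_bag_subset_nodesMeeting (hp _ (Walk.start_mem_support _)))).trans ?_
    exact ih (fun x hx => hp x (List.mem_cons_of_mem _ hx)) hk₂ hj

lemma preconnectedOn_nodesMeeting {X : Set V} (hX : G.PreconnectedOn X) :
    d.T.PreconnectedOn (d.nodesMeeting X) := by
  rintro i ⟨u, hu, hi⟩ j ⟨v, hv, hj⟩
  obtain ⟨p, hp⟩ := hX u hu v hv
  exact d.reachableIn_nodesMeeting p hp hi hj

lemma exists_bag_meets_all {α : Type*} [Fintype α] [Nonempty α] (F : α → Set V)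
    (hF : ∀ a, G.PreconnectedOn (F a)) (htouch : ∀ a b, G.Touches (F a) (F b)) :
    ∃ i, ∀ a, ∃ v ∈ F a, v ∈ d.bag i := by
  have hmeet : ∀ a b, (d.nodesMeeting (F a) ∩ d.nodesMeeting (F b)).Nonempty := by
    intro a b
    rcases htouch a b with ⟨v, hva, hvb⟩ | ⟨u, hu, v, hv, huv⟩
    · obtain ⟨i, hi⟩ := d.mem_vert v
      exact ⟨i, ⟨v, hva, hi⟩, v, hvb, hi⟩
    · obtain ⟨i, hui, hvi⟩ := d.mem_edge u v huv
      exact ⟨i, ⟨u, hu, hui⟩, v, hv, hvi⟩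
  obtain ⟨i, hi⟩ := d.acyc.helly univ univ_nonempty (fun a => d.nodesMeeting (F a))
    (fun a _ => d.preconnectedOn_nodesMeeting (hF a)) (fun a _ b _ => hmeet a b)
  exact ⟨i, fun a => hi a (mem_univ a)⟩

end TreeDecomp

lemma treewidth_eq_of_forall_exists_bag {V : Type} {G : SimpleGraph V} {k : ℕ}
    (d : TreeDecomp G) (hd : ∀ i, #(d.bag i) ≤ k + 1)
    (h : ∀ d : TreeDecomp G, ∃ i, k + 1 ≤ #(d.bag i)) : treewidth G = k := by
  refine le_antisymm (Nat.sInf_le ⟨d, hd⟩) (le_csInf ⟨k, d, hd⟩ ?_)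
  rintro n ⟨d', hd'⟩
  obtain ⟨i, hi⟩ := h d'
  have := hd' i
  omega

lemma gridGraph_eq_boxProd (m : ℕ) : gridGraph m = pathGraph m □ pathGraph m := by
  ext ⟨a, b⟩ ⟨c, d⟩
  simp only [gridGraph, fromRel_adj, boxProd_adj, pathGraph_adj, ne_eq, Prod.mk.injEq,
    Fin.ext_iff]
  omega

lemma finProdFinEquiv_le_add_of_adj {m : ℕ} {p q : Fin m × Fin m} (h : (gridGraph m).Adj p q) :
    (finProdFinEquiv p : ℕ) ≤ finProdFinEquiv q + m := by
  rw [gridGraph_eq_boxProd, boxProd_adj, pathGraph_adj, pathGraph_adj] at h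
  have := p.2.isLt
  rcases h with ⟨hp | hp, h⟩ | ⟨hp | hp, h⟩ <;>
    simp only [finProdFinEquiv_apply_val, h, ← hp, mul_add, mul_one] <;> omega

def sweepBag (m k : ℕ) : Finset (Fin m × Fin m) :=
  {p | (finProdFinEquiv p : ℕ) ≤ k ∧ k ≤ finProdFinEquiv p + m}

lemma card_sweepBag_le (m k : ℕ) : #(sweepBag m k) ≤ m + 1 := by
  calc #(sweepBag m k)
      ≤ #(Icc (k - m) k) := by
        refine card_le_card_of_injOn (fun p => (finProdFinEquiv p : ℕ)) (fun p hp => ?_) ?_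
        · simp only [sweepBag, coe_filter, mem_univ, true_and, Set.mem_ofPred_eq] at hp
          simp only [coe_Icc, Set.mem_Icc]
          omega
        · exact (Fin.val_injective.comp finProdFinEquiv.injective).injOn
    _ ≤ m + 1 := by simp only [Nat.card_Icc]; omega

def gridTreeDecomp (m : ℕ) [NeZero m] : TreeDecomp (gridGraph m) where
  ι := Fin (m * m)
  T := pathGraph (m * m)
  conn := ⟨pathGraph_preconnected _⟩
  acyc := pathGraph_isAcyclic _
  bag k := sweepBag m k
  mem_vert v := ⟨finProdFinEquiv v, by simp [sweepBag]⟩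
  mem_edge u v h := by
    have huv := finProdFinEquiv_le_add_of_adj h
    have hvu := finProdFinEquiv_le_add_of_adj h.symm
    rcases le_total (finProdFinEquiv u : ℕ) (finProdFinEquiv v) with hle | hle
    · exact ⟨finProdFinEquiv v, by simp only [sweepBag, mem_filter, mem_univ, true_and]; omega⟩
    · exact ⟨finProdFinEquiv u, by simp only [sweepBag, mem_filter, mem_univ, true_and]; omega⟩
  coherent v i j hi hj p hp x hx := by
    simp only [sweepBag, mem_filter, mem_univ, true_and] at hi hj ⊢
    have := pathGraph_isPath_support_between hp hx
    omega

lemma Finset.min_card_le_card_of_forall_exists_fst_eq_or_snd_eq {α β : Type*} [Fintype α]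
    [Fintype β] (S : Finset (α × β)) (h : ∀ a b, ∃ p ∈ S, p.1 = a ∨ p.2 = b) :
    min (Fintype.card α) (Fintype.card β) ≤ #S := by
  by_cases hrows : ∀ a, ∃ p ∈ S, p.1 = a
  · exact min_le_of_left_le <| card_le_card_of_surjOn Prod.fst fun a _ => hrows a
  · push Not at hrows
    obtain ⟨a, ha⟩ := hrows
    refine min_le_of_right_le <| card_le_card_of_surjOn Prod.snd fun b _ => ?_
    obtain ⟨p, hp, hpa | hpb⟩ := h a b
    exacts [absurd hpa (ha p hp), ⟨p, hp, hpb⟩]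

def gridBramble (n : ℕ) : (Fin (n + 1) × Fin (n + 1)) ⊕ Bool → Set (Fin (n + 2) × Fin (n + 2))
  | .inl (i, j) => Set.range (fun k : Fin (n + 1) => (i.castSucc, k.castSucc)) ∪
      Set.range (fun k : Fin (n + 1) => (k.castSucc, j.castSucc))
  | .inr true => Set.range (fun k => (Fin.last (n + 1), k))
  | .inr false => Set.range (fun k : Fin (n + 1) => (k.castSucc, Fin.last (n + 1)))

lemma preconnectedOn_gridBramble (n : ℕ) (a : (Fin (n + 1) × Fin (n + 1)) ⊕ Bool) :
    (gridGraph (n + 2)).PreconnectedOn (gridBramble n a) := by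
  have hpath := pathGraph_preconnected (n + 1)
  rw [gridGraph_eq_boxProd]
  rcases a with ⟨i, j⟩ | _ | _
  · refine PreconnectedOn.union ?_ ?_ ⟨(i.castSucc, j.castSucc), ⟨j, rfl⟩, ⟨i, rfl⟩⟩
    · exact hpath.preconnectedOn_range
        ((boxProdRight (pathGraph _) (pathGraph _) i.castSucc).toHom.comp (pathGraph.castSuccHom n))
    · exact hpath.preconnectedOn_range
        ((boxProdLeft (pathGraph _) (pathGraph _) j.castSucc).toHom.comp (pathGraph.castSuccHom n))
  · exact hpath.preconnectedOn_range
      ((boxProdLeft (pathGraph _) (pathGraph _) (Fin.last (n + 1))).toHom.comp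
        (pathGraph.castSuccHom n))
  · exact (pathGraph_preconnected _).preconnectedOn_range
      (boxProdRight (pathGraph _) (pathGraph _) (Fin.last (n + 1))).toHom

lemma touches_gridBramble (n : ℕ) :
    ∀ a b, (gridGraph (n + 2)).Touches (gridBramble n a) (gridBramble n b) := by
  have adj_last : (pathGraph (n + 2)).Adj (Fin.last n).castSucc (Fin.last (n + 1)) := by
    simp [pathGraph_adj]
  have cross_bottom (i j : Fin (n + 1)) :
      (gridGraph (n + 2)).Touches (gridBramble n (.inl (i, j))) (gridBramble n (.inr true)) :=
    .inr ⟨_, .inr ⟨Fin.last n, rfl⟩, _, ⟨j.castSucc, rfl⟩,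
      by rw [gridGraph_eq_boxProd, boxProd_adj_left]; exact adj_last⟩
  have cross_right (i j : Fin (n + 1)) :
      (gridGraph (n + 2)).Touches (gridBramble n (.inl (i, j))) (gridBramble n (.inr false)) :=
    .inr ⟨_, .inl ⟨Fin.last n, rfl⟩, _, ⟨i, rfl⟩,
      by rw [gridGraph_eq_boxProd, boxProd_adj_right]; exact adj_last⟩
  have bottom_right :
      (gridGraph (n + 2)).Touches (gridBramble n (.inr true)) (gridBramble n (.inr false)) :=
    .inr ⟨_, ⟨Fin.last (n + 1), rfl⟩, _, ⟨Fin.last n, rfl⟩,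
      by rw [gridGraph_eq_boxProd, boxProd_adj_left]; exact adj_last.symm⟩
  rintro (⟨i, j⟩ | _ | _) (⟨i', j'⟩ | _ | _)
  · exact .inl ⟨(i.castSucc, j'.castSucc), .inl ⟨j', rfl⟩, .inr ⟨i, rfl⟩⟩
  · exact cross_right i j
  · exact cross_bottom i j
  · exact (cross_right i' j').symm
  · exact .inl ⟨_, ⟨0, rfl⟩, ⟨0, rfl⟩⟩
  · exact bottom_right.symm
  · exact (cross_bottom i' j').symm
  · exact bottom_right
  · exact .inl ⟨_, ⟨0, rfl⟩, ⟨0, rfl⟩⟩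

lemma card_le_of_meets_gridBramble {n : ℕ} (S : Finset (Fin (n + 2) × Fin (n + 2)))
    (hS : ∀ a, ∃ v ∈ gridBramble n a, v ∈ S) : n + 3 ≤ #S := by
  classical
  let e : Fin (n + 1) × Fin (n + 1) ↪ Fin (n + 2) × Fin (n + 2) :=
    Fin.castSuccEmb.prodMap Fin.castSuccEmb
  let C := S.preimage e e.injective.injOn
  have hC : n + 1 ≤ #C := by
    have := Finset.min_card_le_card_of_forall_exists_fst_eq_or_snd_eq C fun i j => by
      obtain ⟨v, ⟨k, rfl⟩ | ⟨k, rfl⟩, hv⟩ := hS (.inl (i, j))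
      exacts [⟨(i, k), by simpa [C, e] using hv, .inl rfl⟩,
        ⟨(k, j), by simpa [C, e] using hv, .inr rfl⟩]
    simpa using this
  obtain ⟨_, ⟨k, rfl⟩, hr⟩ := hS (.inr true)
  obtain ⟨_, ⟨l, rfl⟩, hl⟩ := hS (.inr false)
  have hCS : C.map e ⊆ S := map_subset_iff_subset_preimage.2 subset_rfl
  have hl' : (l.castSucc, Fin.last _) ∉ C.map e := by simp [e]
  have hr' : (Fin.last _, k) ∉ insert (l.castSucc, Fin.last _) (C.map e) := by
    simp [e, (Fin.castSucc_ne_last l).symm]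
  calc n + 3 ≤ #C + 2 := by omega
    _ = #(insert (Fin.last _, k) (insert (l.castSucc, Fin.last _) (C.map e))) := by
      rw [card_insert_of_notMem hr', card_insert_of_notMem hl', card_map]
    _ ≤ #S := card_le_card (insert_subset hr (insert_subset hl hCS))

lemma exists_card_bag_ge_gridGraph {n : ℕ} (d : TreeDecomp (gridGraph (n + 2))) :
    ∃ i, n + 3 ≤ #(d.bag i) :=
  let ⟨i, hi⟩ := d.exists_bag_meets_all (gridBramble n) (preconnectedOn_gridBramble n)
    (touches_gridBramble n)
  ⟨i, card_le_of_meets_gridBramble _ hi⟩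

/-- The `m × m` grid graph has tree-width exactly `m`, for `m ≥ 2`. -/
theorem treewidth_gridGraph (m : ℕ) (hm : 2 ≤ m) : treewidth (gridGraph m) = m := by
  obtain ⟨n, rfl⟩ := Nat.exists_eq_add_of_le' hm
  exact treewidth_eq_of_forall_exists_bag (gridTreeDecomp (n + 2))
    (fun _ => card_sweepBag_le _ _) exists_card_bag_ge_gridGraph
end

section
/- Every monotone gridding matrix whose cell graph is acyclic has a consistent orientation, i.e., an assignment of signs f_c : [k] → {-1,1} to columns and f_r : [ℓ] → {-1,1} to rows such that every nonempty entry M_{i,j} satisfies: M_{i,j} = Inc iff f_c(i)·f_r(j) = 1 (and M_{i,j} = Dec iff f_c(i)·f_r(j) = -1). -/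
/-- A monotone gridding matrix with `k` columns and `ℓ` rows (rows numbered bottom to
top): entry `none` is empty, `some true` is the class Inc, `some false` is Dec.
`M i j` is the entry in column `i`, row `j`. -/
abbrev GMatrix (k ℓ : ℕ) := Fin k → Fin ℓ → Option Bool

/-- The cell graph of a gridding matrix: the nonempty entries are the (effective)
vertices; two nonempty entries are adjacent if they share a row or a column and no
nonempty entry lies strictly between them. -/
def cellGraph {k ℓ : ℕ} (M : GMatrix k ℓ) : SimpleGraph (Fin k × Fin ℓ) :=
  SimpleGraph.fromRel (fun x y =>
    M x.1 x.2 ≠ none ∧ M y.1 y.2 ≠ none ∧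
    ((x.1 = y.1 ∧ x.2 < y.2 ∧ ∀ j, x.2 < j → j < y.2 → M x.1 j = none) ∨
     (x.2 = y.2 ∧ x.1 < y.1 ∧ ∀ i, x.1 < i → i < y.1 → M i x.2 = none)))

/-- `M` has a consistent orientation: sign functions on the columns and rows
(`true` standing for `+1`, `false` for `-1`) such that a nonempty entry is Inc
exactly when the product of its column sign and row sign is `+1`, i.e. when the two
signs agree. -/
def HasConsistentOrientation {k ℓ : ℕ} (M : GMatrix k ℓ) : Prop :=
  ∃ (fc : Fin k → Bool) (fr : Fin ℓ → Bool),
    ∀ (i : Fin k) (j : Fin ℓ) (b : Bool), M i j = some b → (b = true ↔ fc i = fr j)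

namespace CG
variable {k ℓ : ℕ}

lemma adj_up {M : GMatrix k ℓ} {i : Fin k} {j j' : Fin ℓ}
    (hj : M i j ≠ none) (hj' : M i j' ≠ none) (hlt : j < j') :
    ∃ j₀, j < j₀ ∧ (cellGraph M).Adj (i, j) (i, j₀) := by
  classical
  set S : Finset (Fin ℓ) := Finset.univ.filter (fun t => j < t ∧ M i t ≠ none) with hS
  have hne : S.Nonempty := ⟨j', by simp [hS, hlt, hj']⟩
  have hmem := S.min'_mem hne
  obtain ⟨-, hmem⟩ := Finset.mem_filter.mp hmem
  refine ⟨S.min' hne, hmem.1, ?_⟩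
  rw [cellGraph, SimpleGraph.fromRel_adj]
  refine ⟨by simp [Prod.ext_iff]; exact fun h => absurd h (ne_of_lt hmem.1), Or.inl ⟨hj, hmem.2, Or.inl ⟨rfl, hmem.1, ?_⟩⟩⟩
  intro t h1 h2
  by_contra hM
  exact absurd (S.min'_le t (by simp [hS, h1, hM])) (not_le.mpr h2)

lemma adj_down {M : GMatrix k ℓ} {i : Fin k} {j j' : Fin ℓ}
    (hj : M i j ≠ none) (hj' : M i j' ≠ none) (hlt : j' < j) :
    ∃ j₀, j₀ < j ∧ (cellGraph M).Adj (i, j) (i, j₀) := by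
  classical
  set S : Finset (Fin ℓ) := Finset.univ.filter (fun t => t < j ∧ M i t ≠ none) with hS
  have hne : S.Nonempty := ⟨j', by simp [hS, hlt, hj']⟩
  have hmem := S.max'_mem hne
  obtain ⟨-, hmem⟩ := Finset.mem_filter.mp hmem
  refine ⟨S.max' hne, hmem.1, ?_⟩
  rw [cellGraph, SimpleGraph.fromRel_adj]
  refine ⟨by simp [Prod.ext_iff]; exact fun h => absurd h.symm (ne_of_lt hmem.1), Or.inr ⟨hmem.2, hj, Or.inl ⟨rfl, hmem.1, ?_⟩⟩⟩
  intro t h1 h2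
  by_contra hM
  exact absurd (S.le_max' t (by simp [hS, h2, hM])) (not_le.mpr h1)

lemma adj_right {M : GMatrix k ℓ} {i i' : Fin k} {j : Fin ℓ}
    (hj : M i j ≠ none) (hj' : M i' j ≠ none) (hlt : i < i') :
    ∃ i₀, i < i₀ ∧ (cellGraph M).Adj (i, j) (i₀, j) := by
  classical
  set S : Finset (Fin k) := Finset.univ.filter (fun t => i < t ∧ M t j ≠ none) with hS
  have hne : S.Nonempty := ⟨i', by simp [hS, hlt, hj']⟩
  have hmem := S.min'_mem hne
  obtain ⟨-, hmem⟩ := Finset.mem_filter.mp hmem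
  refine ⟨S.min' hne, hmem.1, ?_⟩
  rw [cellGraph, SimpleGraph.fromRel_adj]
  refine ⟨by simp [Prod.ext_iff]; exact fun h => absurd h (ne_of_lt hmem.1), Or.inl ⟨hj, hmem.2, Or.inr ⟨rfl, hmem.1, ?_⟩⟩⟩
  intro t h1 h2
  by_contra hM
  exact absurd (S.min'_le t (by simp [hS, h1, hM])) (not_le.mpr h2)

lemma adj_left {M : GMatrix k ℓ} {i i' : Fin k} {j : Fin ℓ}
    (hj : M i j ≠ none) (hj' : M i' j ≠ none) (hlt : i' < i) :
    ∃ i₀, i₀ < i ∧ (cellGraph M).Adj (i, j) (i₀, j) := by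
  classical
  set S : Finset (Fin k) := Finset.univ.filter (fun t => t < i ∧ M t j ≠ none) with hS
  have hne : S.Nonempty := ⟨i', by simp [hS, hlt, hj']⟩
  have hmem := S.max'_mem hne
  obtain ⟨-, hmem⟩ := Finset.mem_filter.mp hmem
  refine ⟨S.max' hne, hmem.1, ?_⟩
  rw [cellGraph, SimpleGraph.fromRel_adj]
  refine ⟨by simp [Prod.ext_iff]; exact fun h => absurd h.symm (ne_of_lt hmem.1), Or.inr ⟨hmem.2, hj, Or.inr ⟨rfl, hmem.1, ?_⟩⟩⟩
  intro t h1 h2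
  by_contra hM
  exact absurd (S.le_max' t (by simp [hS, h2, hM])) (not_le.mpr h1)

lemma adj_entry {M : GMatrix k ℓ} {x y : Fin k × Fin ℓ} (h : (cellGraph M).Adj x y) :
    M x.1 x.2 ≠ none ∧ M y.1 y.2 ≠ none := by
  rw [cellGraph, SimpleGraph.fromRel_adj] at h
  rcases h.2 with ⟨h1, h2, -⟩ | ⟨h1, h2, -⟩
  · exact ⟨h1, h2⟩
  · exact ⟨h2, h1⟩


lemma two_nbrs {M : GMatrix k ℓ}
    (hno : ¬ ∃ i j, M i j ≠ none ∧
      ((∀ i', i' ≠ i → M i' j = none) ∧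
        (∀ j1 j2, M i j1 ≠ none → M i j2 ≠ none → ¬(j1 < j ∧ j < j2)) ∨
       (∀ j', j' ≠ j → M i j' = none) ∧
        (∀ i1 i2, M i1 j ≠ none → M i2 j ≠ none → ¬(i1 < i ∧ i < i2))))
    {e : Fin k × Fin ℓ} (he : M e.1 e.2 ≠ none) (z : Fin k × Fin ℓ) :
    ∃ w, (cellGraph M).Adj e w ∧ w ≠ z := by
  classical
  obtain ⟨i, j⟩ := e
  simp only at he
  have hno' := fun hor => hno ⟨i, j, he, hor⟩
  have main : ∃ n1 n2, (cellGraph M).Adj (i, j) n1 ∧ (cellGraph M).Adj (i, j) n2 ∧ n1 ≠ n2 := by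
    by_cases hrow : ∀ i', i' ≠ i → M i' j = none
    · have hnb : ¬ (∀ j1 j2, M i j1 ≠ none → M i j2 ≠ none → ¬(j1 < j ∧ j < j2)) :=
        fun hnb => hno' (Or.inl ⟨hrow, hnb⟩)
      push_neg at hnb
      obtain ⟨j1, j2, h1, h2, h3, h4⟩ := hnb
      obtain ⟨jd, hjd, hd⟩ := adj_down he h1 h3
      obtain ⟨ju, hju, hu⟩ := adj_up he h2 h4
      exact ⟨_, _, hd, hu, by simp [Prod.ext_iff]; omega⟩
    · push_neg at hrow
      obtain ⟨i', hi', hMi'⟩ := hrow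
      by_cases hcol : ∀ j', j' ≠ j → M i j' = none
      · have hnb : ¬ (∀ i1 i2, M i1 j ≠ none → M i2 j ≠ none → ¬(i1 < i ∧ i < i2)) :=
          fun hnb => hno' (Or.inr ⟨hcol, hnb⟩)
        push_neg at hnb
        obtain ⟨i1, i2, h1, h2, h3, h4⟩ := hnb
        obtain ⟨iL, hiL, hL⟩ := adj_left he h1 h3
        obtain ⟨iR, hiR, hR⟩ := adj_right he h2 h4
        exact ⟨_, _, hL, hR, by simp [Prod.ext_iff]; omega⟩
      · push_neg at hcol
        obtain ⟨j', hj', hMj'⟩ := hcol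
        have hA : ∃ a, a ≠ i ∧ (cellGraph M).Adj (i, j) (a, j) := by
          rcases lt_or_gt_of_ne hi' with hlt | hlt
          · obtain ⟨a, ha, hadj⟩ := adj_left he hMi' hlt
            exact ⟨a, ne_of_lt ha, hadj⟩
          · obtain ⟨a, ha, hadj⟩ := adj_right he hMi' hlt
            exact ⟨a, ne_of_gt ha, hadj⟩
        have hC : ∃ c, c ≠ j ∧ (cellGraph M).Adj (i, j) (i, c) := by
          rcases lt_or_gt_of_ne hj' with hlt | hlt
          · obtain ⟨c, hc, hadj⟩ := adj_down he hMj' hlt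
            exact ⟨c, ne_of_lt hc, hadj⟩
          · obtain ⟨c, hc, hadj⟩ := adj_up he hMj' hlt
            exact ⟨c, ne_of_gt hc, hadj⟩
        obtain ⟨a, ha, hadjA⟩ := hA
        obtain ⟨c, hc, hadjC⟩ := hC
        exact ⟨_, _, hadjA, hadjC, by simp [Prod.ext_iff]; intro h; exact absurd h ha⟩
  obtain ⟨n1, n2, ha1, ha2, hne⟩ := main
  by_cases h1 : n1 = z
  · exact ⟨n2, ha2, h1 ▸ hne.symm ⟩
  · exact ⟨n1, ha1, h1⟩

lemma exists_leaf {M : GMatrix k ℓ} (hac : (cellGraph M).IsAcyclic)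
    {i0 : Fin k} {j0 : Fin ℓ} (h0 : M i0 j0 ≠ none) :
    ∃ i j, M i j ≠ none ∧
      ((∀ i', i' ≠ i → M i' j = none) ∧
        (∀ j1 j2, M i j1 ≠ none → M i j2 ≠ none → ¬(j1 < j ∧ j < j2)) ∨
       (∀ j', j' ≠ j → M i j' = none) ∧
        (∀ i1 i2, M i1 j ≠ none → M i2 j ≠ none → ¬(i1 < i ∧ i < i2))) := by
  classical
  by_contra hno
  have key := fun {e} he z => two_nbrs (M := M) hno (e := e) he z
  set G := cellGraph M with hG
  set B := Fintype.card (Fin k × Fin ℓ) with hB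
  set P : ℕ → Prop := fun n => ∃ (x y : Fin k × Fin ℓ) (p : G.Walk x y), p.IsPath ∧ p.length = n
    with hP
  have hP1 : P 1 := by
    obtain ⟨w, hw, -⟩ := key (e := (i0, j0)) h0 (i0, j0)
    exact ⟨_, _, ((SimpleGraph.Path.singleton hw) : G.Path _ _).1,
      (SimpleGraph.Path.singleton hw).2, rfl⟩
  have hB1 : 1 ≤ B := by
    have : Nonempty (Fin k × Fin ℓ) := ⟨(i0, j0)⟩
    rw [hB]
    exact Fintype.card_pos
  have hPn : P (Nat.findGreatest P B) := Nat.findGreatest_spec hB1 hP1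
  have hn1 : 1 ≤ Nat.findGreatest P B := Nat.le_findGreatest hB1 hP1
  obtain ⟨x, y, p, hp, hlen⟩ := hPn
  have hmax : ∀ (u v : Fin k × Fin ℓ) (q : G.Walk u v), q.IsPath →
      q.length ≤ Nat.findGreatest P B := by
    intro u v q hq
    by_contra hgt
    exact Nat.findGreatest_is_greatest (lt_of_not_ge hgt) (le_of_lt hq.length_lt)
      ⟨u, v, q, hq, rfl⟩
  have hrp : p.reverse.IsPath := hp.reverse
  have hrnil : ¬ p.reverse.Nil := by
    rw [SimpleGraph.Walk.not_nil_iff_lt_length, SimpleGraph.Walk.length_reverse]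
    omega
  obtain ⟨b, hyb, q, hq⟩ := SimpleGraph.Walk.not_nil_iff.mp hrnil
  -- y is an entry
  have hyent : M y.1 y.2 ≠ none := (adj_entry hyb).1
  obtain ⟨w, hyw, hwb⟩ := key hyent b
  by_cases hws : w ∈ p.reverse.support
  · -- take the path from y to w inside p.reverse, plus the edge
    have hedge : s(y, w) ∉ p.reverse.edges := by
      rw [hq]
      simp only [SimpleGraph.Walk.edges_cons, List.mem_cons]
      rintro (hewb | hin)
      · rw [Sym2.eq_iff] at hewb
        rcases hewb with ⟨-, h2⟩ | ⟨h1, h2⟩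
        · exact hwb h2
        · exact G.irrefl (h2 ▸ hyw)
      · have hys : y ∈ q.support := SimpleGraph.Walk.fst_mem_support_of_mem_edges q hin
        have h2 := (SimpleGraph.Walk.cons_isPath_iff hyb q).mp (hq ▸ hrp)
        exact h2.2 hys
    have hr1 : (p.reverse.takeUntil w hws).IsPath := hrp.takeUntil hws
    have huniq := hac.path_unique ⟨p.reverse.takeUntil w hws, hr1⟩ (SimpleGraph.Path.singleton hyw)
    have : s(y, w) ∈ (p.reverse.takeUntil w hws).edges := by
      rw [show p.reverse.takeUntil w hws = (SimpleGraph.Path.singleton hyw : G.Walk y w) from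
        congrArg Subtype.val huniq]
      exact SimpleGraph.Path.mk'_mem_edges_singleton hyw
    exact hedge (SimpleGraph.Walk.edges_takeUntil_subset _ hws this)
  · have hext : (SimpleGraph.Walk.cons hyw.symm p.reverse).IsPath :=
      (SimpleGraph.Walk.cons_isPath_iff _ _).mpr ⟨hrp, hws⟩
    have := hmax _ _ _ hext
    rw [SimpleGraph.Walk.length_cons, SimpleGraph.Walk.length_reverse, hlen] at this
    omega


lemma isAcyclic_mono {V : Type*} {G H : SimpleGraph V} (hle : G ≤ H) (hH : H.IsAcyclic) :
    G.IsAcyclic := by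
  intro v c hc
  exact hH (c.transfer H (fun e he => SimpleGraph.edgeSet_mono hle (c.edges_subset_edgeSet he)))
    (hc.transfer _)

/-- removing an entry that is alone in its row and not strictly between two entries
of its column gives a cell graph that is a subgraph. -/
lemma remove_le {M : GMatrix k ℓ} {i : Fin k} {j : Fin ℓ}
    (hrow : ∀ i', i' ≠ i → M i' j = none)
    (hnb : ∀ j1 j2, M i j1 ≠ none → M i j2 ≠ none → ¬(j1 < j ∧ j < j2)) :
    cellGraph (fun a b => if a = i ∧ b = j then none else M a b) ≤ cellGraph M := by
  classical
  set M' : GMatrix k ℓ := fun a b => if a = i ∧ b = j then none else M a b with hM'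
  have hent : ∀ a b, M' a b ≠ none → M a b ≠ none ∧ ¬(a = i ∧ b = j) := by
    intro a b h
    by_cases hij : a = i ∧ b = j
    · simp [hM', hij] at h
    · refine ⟨?_, hij⟩; simpa [hM', hij] using h
  have hrel : ∀ x y : Fin k × Fin ℓ,
      (M' x.1 x.2 ≠ none ∧ M' y.1 y.2 ≠ none ∧
        ((x.1 = y.1 ∧ x.2 < y.2 ∧ ∀ t, x.2 < t → t < y.2 → M' x.1 t = none) ∨
         (x.2 = y.2 ∧ x.1 < y.1 ∧ ∀ t, x.1 < t → t < y.1 → M' t x.2 = none))) →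
      (M x.1 x.2 ≠ none ∧ M y.1 y.2 ≠ none ∧
        ((x.1 = y.1 ∧ x.2 < y.2 ∧ ∀ t, x.2 < t → t < y.2 → M x.1 t = none) ∨
         (x.2 = y.2 ∧ x.1 < y.1 ∧ ∀ t, x.1 < t → t < y.1 → M t x.2 = none))) := by
    rintro x y ⟨hx, hy, hor⟩
    obtain ⟨hx1, hx2⟩ := hent _ _ hx
    obtain ⟨hy1, hy2⟩ := hent _ _ hy
    refine ⟨hx1, hy1, ?_⟩
    rcases hor with ⟨hcol, hlt, hbet⟩ | ⟨hrw, hlt, hbet⟩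
    · refine Or.inl ⟨hcol, hlt, fun t h1 h2 => ?_⟩
      by_cases hij : x.1 = i ∧ t = j
      · exfalso
        obtain ⟨hxi, rfl⟩ := hij
        exact hnb x.2 y.2 (hxi ▸ hx1) (by rw [← hcol] at hy1; exact hxi ▸ hy1) ⟨h1, h2⟩
      · have := hbet t h1 h2
        simpa [hM', hij] using this
    · refine Or.inr ⟨hrw, hlt, fun t h1 h2 => ?_⟩
      by_cases hij : t = i ∧ x.2 = j
      · exfalso
        obtain ⟨rfl, hxj⟩ := hij
        have : x.1 ≠ t := ne_of_lt h1
        exact hx1 (hxj ▸ hrow x.1 this)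
      · have := hbet t h1 h2
        simpa [hM', hij] using this
  intro x y hadj
  rw [cellGraph, SimpleGraph.fromRel_adj] at hadj ⊢
  exact ⟨hadj.1, hadj.2.imp (hrel x y) (hrel y x)⟩

/-- symmetric version: alone in its column, not strictly between two entries of its row. -/
lemma remove_le' {M : GMatrix k ℓ} {i : Fin k} {j : Fin ℓ}
    (hcol : ∀ j', j' ≠ j → M i j' = none)
    (hnb : ∀ i1 i2, M i1 j ≠ none → M i2 j ≠ none → ¬(i1 < i ∧ i < i2)) :
    cellGraph (fun a b => if a = i ∧ b = j then none else M a b) ≤ cellGraph M := by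
  classical
  set M' : GMatrix k ℓ := fun a b => if a = i ∧ b = j then none else M a b with hM'
  have hent : ∀ a b, M' a b ≠ none → M a b ≠ none ∧ ¬(a = i ∧ b = j) := by
    intro a b h
    by_cases hij : a = i ∧ b = j
    · simp [hM', hij] at h
    · refine ⟨?_, hij⟩; simpa [hM', hij] using h
  have hrel : ∀ x y : Fin k × Fin ℓ,
      (M' x.1 x.2 ≠ none ∧ M' y.1 y.2 ≠ none ∧
        ((x.1 = y.1 ∧ x.2 < y.2 ∧ ∀ t, x.2 < t → t < y.2 → M' x.1 t = none) ∨
         (x.2 = y.2 ∧ x.1 < y.1 ∧ ∀ t, x.1 < t → t < y.1 → M' t x.2 = none))) →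
      (M x.1 x.2 ≠ none ∧ M y.1 y.2 ≠ none ∧
        ((x.1 = y.1 ∧ x.2 < y.2 ∧ ∀ t, x.2 < t → t < y.2 → M x.1 t = none) ∨
         (x.2 = y.2 ∧ x.1 < y.1 ∧ ∀ t, x.1 < t → t < y.1 → M t x.2 = none))) := by
    rintro x y ⟨hx, hy, hor⟩
    obtain ⟨hx1, hx2⟩ := hent _ _ hx
    obtain ⟨hy1, hy2⟩ := hent _ _ hy
    refine ⟨hx1, hy1, ?_⟩
    rcases hor with ⟨hcl, hlt, hbet⟩ | ⟨hrw, hlt, hbet⟩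
    · refine Or.inl ⟨hcl, hlt, fun t h1 h2 => ?_⟩
      by_cases hij : x.1 = i ∧ t = j
      · exfalso
        obtain ⟨rfl, rfl⟩ := hij
        exact hx1 (hcol x.2 (ne_of_lt h1))
      · have := hbet t h1 h2
        simpa [hM', hij] using this
    · refine Or.inr ⟨hrw, hlt, fun t h1 h2 => ?_⟩
      by_cases hij : t = i ∧ x.2 = j
      · exfalso
        obtain ⟨rfl, hxj⟩ := hij
        exact hnb x.1 y.1 (hxj ▸ hx1) (by rw [← hrw] at hy1; exact hxj ▸ hy1) ⟨h1, h2⟩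
      · have := hbet t h1 h2
        simpa [hM', hij] using this
  intro x y hadj
  rw [cellGraph, SimpleGraph.fromRel_adj] at hadj ⊢
  exact ⟨hadj.1, hadj.2.imp (hrel x y) (hrel y x)⟩


def entries (M : GMatrix k ℓ) : Finset (Fin k × Fin ℓ) :=
  Finset.univ.filter (fun p => M p.1 p.2 ≠ none)

lemma main_aux : ∀ (n : ℕ) (M : GMatrix k ℓ), (entries M).card ≤ n →
    (cellGraph M).IsAcyclic → HasConsistentOrientation M := by
  classical
  intro n
  induction n with
  | zero =>
    intro M hcard _
    refine ⟨fun _ => true, fun _ => true, fun i j b hb => ?_⟩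
    have : (i, j) ∈ entries M := by simp [entries, hb]
    rw [Finset.card_eq_zero.mp (Nat.le_zero.mp hcard)] at this
    simp at this
  | succ n ih =>
    intro M hcard hac
    by_cases hE : ∀ i j, M i j = none
    · exact ⟨fun _ => true, fun _ => true, fun i j b hb => by rw [hE i j] at hb; simp at hb⟩
    · push_neg at hE
      obtain ⟨i0, j0, h0⟩ := hE
      obtain ⟨i, j, hij, hleaf⟩ := exists_leaf hac h0
      set M' : GMatrix k ℓ := fun a b => if a = i ∧ b = j then none else M a b with hM'
      have hentM' : entries M' = (entries M).erase (i, j) := by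
        ext ⟨a, b⟩
        simp only [entries, Finset.mem_filter, Finset.mem_univ, true_and, Finset.mem_erase]
        constructor
        · intro h
          by_cases hab : a = i ∧ b = j
          · simp [hM', hab] at h
          · refine ⟨by simpa [Prod.ext_iff] using hab, by simpa [hM', hab] using h⟩
        · rintro ⟨hne, h⟩
          have hab : ¬(a = i ∧ b = j) := by simpa [Prod.ext_iff] using hne
          simpa [hM', hab] using h
      have hcard' : (entries M').card ≤ n := by
        rw [hentM', Finset.card_erase_of_mem (by simp [entries, hij])]
        omega
      have hle : cellGraph M' ≤ cellGraph M := by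
        rcases hleaf with ⟨h1, h2⟩ | ⟨h1, h2⟩
        · exact remove_le h1 h2
        · exact remove_le' h1 h2
      obtain ⟨fc, fr, hco⟩ := ih M' hcard' (isAcyclic_mono hle hac)
      obtain ⟨b, hb⟩ := Option.ne_none_iff_exists'.mp hij
      have hM'eq : ∀ a c, ¬(a = i ∧ c = j) → M' a c = M a c := by
        intro a c h; simp [hM', h]
      rcases hleaf with ⟨h1, -⟩ | ⟨h1, -⟩
      · -- alone in row j : fix fr at j
        refine ⟨fc, Function.update fr j (if b then fc i else !(fc i)), fun a c b' hb' => ?_⟩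
        by_cases hcj : c = j
        · subst hcj
          have hai : a = i := by
            by_contra hne
            exact absurd hb' (by rw [h1 a hne]; simp)
          subst hai
          rw [hb] at hb'
          obtain rfl : b = b' := by injection hb'
          rw [Function.update_self]
          cases b <;> simp
        · rw [Function.update_of_ne hcj]
          exact hco a c b' (by rwa [hM'eq a c (by simp [hcj])])
      · -- alone in column i : fix fc at i
        refine ⟨Function.update fc i (if b then fr j else !(fr j)), fr, fun a c b' hb' => ?_⟩
        by_cases hai : a = i
        · subst hai
          have hcj : c = j := by
            by_contra hne
            exact absurd hb' (by rw [h1 c hne]; simp)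
          subst hcj
          rw [hb] at hb'
          obtain rfl : b = b' := by injection hb'
          rw [Function.update_self]
          cases b <;> simp
        · rw [Function.update_of_ne hai]
          exact hco a c b' (by rwa [hM'eq a c (by simp [hai])])

end CG

/-- Every monotone gridding matrix whose cell graph is acyclic has a consistent
orientation. -/


theorem acyclic_hasConsistentOrientation {k ℓ : ℕ} (M : GMatrix k ℓ)
    (h : (cellGraph M).IsAcyclic) : HasConsistentOrientation M :=
  CG.main_aux (CG.entries M).card M le_rfl h
end

section
/- If a monotone gridding matrix M has a consistent orientation, then so does any matrix obtained from M by applying further column reversals and row complementations; moreover, a k × ℓ monotone gridding matrix M has a consistent orientation if and only if every cycle in the bipartite 'sign graph' (with vertices the rows and columns, and an edge between row j and column i for each nonempty entry M_{i,j}, labeled +1 for Inc and -1 for Dec) has an even number of -1 labels. -/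
/-- Apply column reversals (for columns `i` with `flipC i = true`) and row
complementations (for rows `j` with `flipR j = true`) to `M`: each such operation
swaps Inc and Dec in the corresponding column or row. -/
def applyFlips {k ℓ : ℕ} (M : GMatrix k ℓ) (flipC : Fin k → Bool) (flipR : Fin ℓ → Bool) :
    GMatrix k ℓ :=
  fun i j => (M i j).map (fun b => xor (xor b (flipC i)) (flipR j))

/-- Every cycle of the bipartite sign graph (vertices: rows and columns; one edge per
nonempty entry, labeled `-1` for Dec) carries an even number of `-1` labels.  A cycle
is given by distinct columns `ci 0, …, ci (m+1)` and distinct rows `rj 0, …, rj (m+1)`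
with the edges `(ci t, rj t)` and `(ci (t+1), rj t)` (cyclically) all present. -/
def SignGraphCyclesEven {k ℓ : ℕ} (M : GMatrix k ℓ) : Prop :=
  ∀ m : ℕ, ∀ (ci : Fin (m + 2) → Fin k) (rj : Fin (m + 2) → Fin ℓ),
    Function.Injective ci → Function.Injective rj →
    (∀ t, M (ci t) (rj t) ≠ none ∧ M (ci (t + 1)) (rj t) ≠ none) →
    Even ((Finset.univ.filter (fun t => M (ci t) (rj t) = some false)).card +
      (Finset.univ.filter (fun t => M (ci (t + 1)) (rj t) = some false)).card)

/-!
Write a consistent orientation additively over `ZMod 2`: it is a potential `(x, y)` on columns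
and rows with `label (i, j) = x i + y j` at every nonempty entry, where Dec has label `1`.
Flips add a potential to the labels, and along a cycle any potential cancels; this gives the
first claim and the forward implication. Conversely, add the nonempty entries one at a time.
A new entry either closes a cycle with a path of earlier entries, and then the even-cycle
condition says that the current potential already fits it, or it joins two components of the
sign graph, and the potential can be shifted by a constant on one of them.
-/

open Function Sum Finset

namespace GMatrix

variable {k ℓ : ℕ}

/-- The label of the sign-graph edge at a nonempty entry, written additively: Dec (`-1`)
is `1` and Inc (`+1`) is `0`. -/
def signLabel (M : GMatrix k ℓ) (i : Fin k) (j : Fin ℓ) : ZMod 2 :=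
  if M i j = some false then 1 else 0

def IsPotential (M : GMatrix k ℓ) (x : Fin k → ZMod 2) (y : Fin ℓ → ZMod 2) : Prop :=
  ∀ i j, M i j ≠ none → M.signLabel i j = x i + y j

theorem hasConsistentOrientation_iff_exists_isPotential (M : GMatrix k ℓ) :
    HasConsistentOrientation M ↔ ∃ x y, M.IsPotential x y := by
  constructor
  · rintro ⟨fc, fr, h⟩
    refine ⟨fun i => (fc i).toNat, fun j => (fr j).toNat, fun i j hij => ?_⟩
    obtain ⟨b, hb⟩ := Option.ne_none_iff_exists'.mp hij
    have key : ∀ b u v : Bool, (b = true ↔ u = v) →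
        (if some b = some false then (1 : ZMod 2) else 0) = (u.toNat : ZMod 2) + v.toNat := by
      decide
    simpa only [signLabel, hb] using key b _ _ (h i j b hb)
  · rintro ⟨x, y, h⟩
    refine ⟨fun i => decide (x i = 0), fun j => decide (y j = 0), fun i j b hb => ?_⟩
    have key : ∀ (b : Bool) (u v : ZMod 2), (if some b = some false then 1 else 0) = u + v →
        (b = true ↔ decide (u = 0) = decide (v = 0)) := by
      decide
    have hM := h i j (Option.ne_none_iff_exists'.mpr ⟨b, hb⟩)
    simp only [signLabel, hb] at hM
    exact key b _ _ hM

theorem IsPotential.applyFlips {M : GMatrix k ℓ} {x : Fin k → ZMod 2} {y : Fin ℓ → ZMod 2}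
    (h : M.IsPotential x y) (flipC : Fin k → Bool) (flipR : Fin ℓ → Bool) :
    (applyFlips M flipC flipR).IsPotential (fun i => x i + (flipC i).toNat)
      (fun j => y j + (flipR j).toNat) := by
  intro i j hij
  obtain ⟨b, hb⟩ : ∃ b, M i j = some b :=
    Option.ne_none_iff_exists'.mp fun h' => hij (by simp [_root_.applyFlips, h'])
  have key : ∀ b c r : Bool,
      (if some (xor (xor b c) r) = some false then (1 : ZMod 2) else 0) =
        (if some b = some false then 1 else 0) + c.toNat + r.toNat := by
    decide
  have hM := h i j (Option.ne_none_iff_exists'.mpr ⟨b, hb⟩)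
  simp only [signLabel, _root_.applyFlips, hb, Option.map_some] at hM ⊢
  rw [key, hM]
  ring

def cycleSum {n : ℕ} [NeZero n] (w : Fin k → Fin ℓ → ZMod 2) (ci : Fin n → Fin k)
    (rj : Fin n → Fin ℓ) : ZMod 2 :=
  ∑ t, (w (ci t) (rj t) + w (ci (t + 1)) (rj t))

/-- Each column and each row of a cycle is visited twice, so potentials cancel mod 2. -/
theorem cycleSum_add_potential {n : ℕ} [NeZero n] (w : Fin k → Fin ℓ → ZMod 2)
    (x : Fin k → ZMod 2) (y : Fin ℓ → ZMod 2) (ci : Fin n → Fin k) (rj : Fin n → Fin ℓ) :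
    cycleSum (fun i j => w i j + x i + y j) ci rj = cycleSum w ci rj := by
  have hshift : ∑ t, x (ci (t + 1)) = ∑ t, x (ci t) :=
    Fintype.sum_equiv (Equiv.addRight 1) _ _ fun _ => rfl
  simp only [cycleSum, sum_add_distrib, hshift]
  linear_combination (∑ t, x (ci t) + ∑ t, y (rj t)) * (CharTwo.two_eq_zero : (2 : ZMod 2) = 0)

theorem even_card_filter_add_card_filter_iff {n : ℕ} [NeZero n] (M : GMatrix k ℓ)
    (ci : Fin n → Fin k) (rj : Fin n → Fin ℓ) :
    Even ((univ.filter (fun t => M (ci t) (rj t) = some false)).card +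
      (univ.filter (fun t => M (ci (t + 1)) (rj t) = some false)).card) ↔
      cycleSum M.signLabel ci rj = 0 := by
  rw [← ZMod.natCast_eq_zero_iff_even]
  push_cast
  simp only [natCast_card_filter, cycleSum, signLabel, sum_add_distrib]

theorem signGraphCyclesEven_iff (M : GMatrix k ℓ) :
    SignGraphCyclesEven M ↔ ∀ (m : ℕ) (ci : Fin (m + 2) → Fin k) (rj : Fin (m + 2) → Fin ℓ),
      Injective ci → Injective rj →
      (∀ t, M (ci t) (rj t) ≠ none ∧ M (ci (t + 1)) (rj t) ≠ none) →
      cycleSum M.signLabel ci rj = 0 := by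
  simp only [SignGraphCyclesEven, even_card_filter_add_card_filter_iff]

theorem IsPotential.signGraphCyclesEven {M : GMatrix k ℓ} {x : Fin k → ZMod 2}
    {y : Fin ℓ → ZMod 2} (h : M.IsPotential x y) : SignGraphCyclesEven M := by
  rw [signGraphCyclesEven_iff]
  intro m ci rj _ _ hedge
  calc cycleSum M.signLabel ci rj = cycleSum (fun i j => 0 + x i + y j) ci rj :=
        sum_congr rfl fun t _ => by simp only [h _ _ (hedge t).1, h _ _ (hedge t).2, zero_add]
    _ = 0 := by rw [cycleSum_add_potential]; simp [cycleSum]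

def eraseEntry (M : GMatrix k ℓ) (i₀ : Fin k) (j₀ : Fin ℓ) : GMatrix k ℓ :=
  fun i j => if i = i₀ ∧ j = j₀ then none else M i j

theorem eraseEntry_eq_of_ne_none {M : GMatrix k ℓ} {i₀ i : Fin k} {j₀ j : Fin ℓ}
    (h : M.eraseEntry i₀ j₀ i j ≠ none) : M.eraseEntry i₀ j₀ i j = M i j := by
  unfold eraseEntry at h ⊢
  split_ifs at h ⊢ with hij
  · exact absurd rfl h
  · rfl

theorem signGraphCyclesEven_eraseEntry {M : GMatrix k ℓ} (h : SignGraphCyclesEven M)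
    (i₀ : Fin k) (j₀ : Fin ℓ) : SignGraphCyclesEven (M.eraseEntry i₀ j₀) := by
  rw [signGraphCyclesEven_iff] at h ⊢
  intro m ci rj hci hrj hedge
  have hagree : ∀ {i j}, M.eraseEntry i₀ j₀ i j ≠ none →
      (M.eraseEntry i₀ j₀).signLabel i j = M.signLabel i j := fun hij => by
    simp only [signLabel, eraseEntry_eq_of_ne_none hij]
  calc cycleSum (M.eraseEntry i₀ j₀).signLabel ci rj = cycleSum M.signLabel ci rj :=
        sum_congr rfl fun t _ => by rw [hagree (hedge t).1, hagree (hedge t).2]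
    _ = 0 := h m ci rj hci hrj fun t => by
        simpa only [eraseEntry_eq_of_ne_none (hedge t).1, eraseEntry_eq_of_ne_none (hedge t).2]
          using hedge t

theorem IsPotential.of_eraseEntry {M : GMatrix k ℓ} {i₀ : Fin k} {j₀ : Fin ℓ}
    {x : Fin k → ZMod 2} {y : Fin ℓ → ZMod 2} (h : (M.eraseEntry i₀ j₀).IsPotential x y)
    (h₀ : M.signLabel i₀ j₀ = x i₀ + y j₀) : M.IsPotential x y := by
  intro i j hij
  by_cases hij₀ : i = i₀ ∧ j = j₀
  · obtain ⟨rfl, rfl⟩ := hij₀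
    exact h₀
  · have hM : M.eraseEntry i₀ j₀ i j = M i j := if_neg hij₀
    simpa only [signLabel, hM] using h i j (hM ▸ hij)

def signGraph (M : GMatrix k ℓ) : SimpleGraph (Fin k ⊕ Fin ℓ) where
  Adj
    | inl i, inr j => M i j ≠ none
    | inr j, inl i => M i j ≠ none
    | _, _ => False
  symm := ⟨by rintro (i | j) (i' | j') <;> simp⟩
  loopless := ⟨by rintro (i | j) <;> simp⟩

theorem IsPotential.shift_on {M : GMatrix k ℓ} {x : Fin k → ZMod 2} {y : Fin ℓ → ZMod 2}
    (h : M.IsPotential x y) {S : Set (Fin k ⊕ Fin ℓ)}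
    (hS : ∀ i j, M i j ≠ none → (inl i ∈ S ↔ inr j ∈ S)) (c : ZMod 2) :
    M.IsPotential (fun i => x i + S.indicator (fun _ => c) (inl i))
      (fun j => y j + S.indicator (fun _ => c) (inr j)) := by
  intro i j hij
  rw [h i j hij]
  by_cases hi : inl i ∈ S
  · simp only [Set.indicator_of_mem hi, Set.indicator_of_mem ((hS i j hij).mp hi)]
    linear_combination -c * (CharTwo.two_eq_zero : (2 : ZMod 2) = 0)
  · simp only [Set.indicator_of_notMem hi,
      Set.indicator_of_notMem (mt (hS i j hij).mpr hi), add_zero]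

/-- The path `cs 0, rs 0, cs 1, rs 1, …, cs n, rs n` in the sign graph. -/
def IsAlternatingPath (M : GMatrix k ℓ) {n : ℕ} (cs : Fin (n + 1) → Fin k)
    (rs : Fin (n + 1) → Fin ℓ) : Prop :=
  Injective cs ∧ Injective rs ∧ (∀ t, M (cs t) (rs t) ≠ none) ∧
    ∀ t : Fin n, M (cs t.succ) (rs t.castSucc) ≠ none

theorem IsAlternatingPath.cons {M : GMatrix k ℓ} {n : ℕ} {cs : Fin (n + 1) → Fin k}
    {rs : Fin (n + 1) → Fin ℓ} (h : M.IsAlternatingPath cs rs) {c : Fin k} {r : Fin ℓ}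
    (hc : c ∉ Set.range cs) (hr : r ∉ Set.range rs) (hcr : M c r ≠ none)
    (hcs : M (cs 0) r ≠ none) :
    M.IsAlternatingPath (Fin.cons c cs : Fin (n + 2) → Fin k) (Fin.cons r rs) := by
  obtain ⟨hcinj, hrinj, hdiag, hsucc⟩ := h
  refine ⟨Fin.cons_injective_iff.mpr ⟨hc, hcinj⟩, Fin.cons_injective_iff.mpr ⟨hr, hrinj⟩,
    Fin.cases hcr fun t => hdiag t, Fin.cases hcs fun t => ?_⟩
  simpa only [Fin.cons_succ, ← Fin.succ_castSucc] using hsucc t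

theorem exists_isAlternatingPath {M : GMatrix k ℓ} {c : Fin k} {r : Fin ℓ}
    (p : (signGraph M).Walk (inl c) (inr r)) (hp : p.IsPath) :
    ∃ (n : ℕ) (cs : Fin (n + 1) → Fin k) (rs : Fin (n + 1) → Fin ℓ),
      M.IsAlternatingPath cs rs ∧ cs 0 = c ∧ rs (Fin.last n) = r ∧
      ∀ t, inl (cs t) ∈ p.support ∧ inr (rs t) ∈ p.support :=
  match p, hp with
  | .cons (v := inl _) h _, _ => h.elim
  | .cons (v := inr _) _ (.cons (v := inr _) h' _), _ => h'.elim
  | .cons h .nil, _ =>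
    ⟨0, fun _ => c, fun _ => r, ⟨injective_of_subsingleton (α := Fin 1) _,
      injective_of_subsingleton (α := Fin 1) _, fun _ => h, Fin.elim0⟩, rfl, rfl,
      fun _ => by simp⟩
  | .cons (v := inr j) h (.cons (v := inl i') h' q'), hp => by
    obtain ⟨n, cs, rs, hpath, hc0, hrl, hsupp⟩ := exists_isAlternatingPath q' hp.of_cons.of_cons
    have hnodup := hp.support_nodup
    simp only [SimpleGraph.Walk.support_cons, List.nodup_cons, List.mem_cons, reduceCtorEq,
      false_or] at hnodup
    refine ⟨n + 1, Fin.cons c cs, Fin.cons j rs,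
      hpath.cons ?_ ?_ h (hc0 ▸ h'), rfl, by simpa [← Fin.succ_last] using hrl, ?_⟩
    · rintro ⟨t, rfl⟩
      exact hnodup.1 (hsupp t).1
    · rintro ⟨t, rfl⟩
      exact hnodup.2.1 (hsupp t).2
    · refine Fin.cases (by simp) fun t => ?_
      simp only [Fin.cons_succ, SimpleGraph.Walk.support_cons, List.mem_cons, (hsupp t).1,
        (hsupp t).2, or_true, and_self]

/-- Closing the path through `(i₀, j₀)` gives a cycle on which every defect
`signLabel i j + x i + y j` vanishes except the one at `(i₀, j₀)`. -/
theorem signLabel_eq_of_isAlternatingPath {M : GMatrix k ℓ}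
    (hcyc : SignGraphCyclesEven M) {i₀ : Fin k} {j₀ : Fin ℓ} (h₀ : M i₀ j₀ ≠ none)
    {x : Fin k → ZMod 2} {y : Fin ℓ → ZMod 2} (hxy : (M.eraseEntry i₀ j₀).IsPotential x y)
    {m : ℕ} {cs : Fin (m + 2) → Fin k} {rs : Fin (m + 2) → Fin ℓ}
    (hpath : (M.eraseEntry i₀ j₀).IsAlternatingPath cs rs) (hc : cs 0 = i₀)
    (hr : rs (Fin.last (m + 1)) = j₀) :
    M.signLabel i₀ j₀ = x i₀ + y j₀ := by
  obtain ⟨hcinj, hrinj, hdiag, hsucc⟩ := hpath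
  set δ : Fin k → Fin ℓ → ZMod 2 := fun i j => M.signLabel i j + x i + y j
  have hδ : ∀ i j, M.eraseEntry i₀ j₀ i j ≠ none → δ i j = 0 := fun i j hij => by
    have hlabel := hxy i j hij
    simp only [signLabel, eraseEntry_eq_of_ne_none hij] at hlabel
    simp only [δ, signLabel, hlabel]
    linear_combination (x i + y j) * (CharTwo.two_eq_zero : (2 : ZMod 2) = 0)
  have hM : ∀ {i j}, M.eraseEntry i₀ j₀ i j ≠ none → M i j ≠ none :=
    fun hij => eraseEntry_eq_of_ne_none hij ▸ hij
  have hsucc' : ∀ t : Fin (m + 1),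
      M.eraseEntry i₀ j₀ (cs (t.castSucc + 1)) (rs t.castSucc) ≠ none := fun t => by
    simpa only [Fin.coeSucc_eq_succ] using hsucc t
  have hedge : ∀ t, M (cs t) (rs t) ≠ none ∧ M (cs (t + 1)) (rs t) ≠ none := fun t =>
    ⟨hM (hdiag t), Fin.lastCases (by rwa [Fin.last_add_one, hc, hr]) (fun t => hM (hsucc' t)) t⟩
  have hδ₀ : δ i₀ j₀ = 0 := calc
    δ i₀ j₀ = cycleSum δ cs rs := by
      simp only [cycleSum, Fin.sum_univ_castSucc (n := m + 1),
        Fin.last_add_one, hc, hr, hδ _ _ (hdiag _), hδ _ _ (hsucc' _), sum_const_zero, zero_add]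
    _ = cycleSum M.signLabel cs rs := cycleSum_add_potential _ _ _ _ _
    _ = 0 := (signGraphCyclesEven_iff M).mp hcyc m cs rs hcinj hrinj hedge
  linear_combination hδ₀ - (x i₀ + y j₀) * (CharTwo.two_eq_zero : (2 : ZMod 2) = 0)

/-- If `(i₀, j₀)` closes a cycle, the old potential already fits there; otherwise it is
shifted by its defect at `(i₀, j₀)` on the component of `i₀`. -/
theorem exists_isPotential_of_eraseEntry {M : GMatrix k ℓ}
    (hcyc : SignGraphCyclesEven M) {i₀ : Fin k} {j₀ : Fin ℓ} (h₀ : M i₀ j₀ ≠ none)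
    {x : Fin k → ZMod 2} {y : Fin ℓ → ZMod 2} (hxy : (M.eraseEntry i₀ j₀).IsPotential x y) :
    ∃ x y, M.IsPotential x y := by
  by_cases hreach : (signGraph (M.eraseEntry i₀ j₀)).Reachable (inl i₀) (inr j₀)
  · obtain ⟨n, cs, rs, hpath, hc, hr, -⟩ := exists_isAlternatingPath _ hreach.some.toPath.2
    obtain _ | m := n
    · exact absurd (hc ▸ hr ▸ hpath.2.2.1 0) (by simp [eraseEntry])
    exact ⟨x, y, hxy.of_eraseEntry (signLabel_eq_of_isAlternatingPath hcyc h₀ hxy hpath hc hr)⟩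
  · set S := {v | (signGraph (M.eraseEntry i₀ j₀)).Reachable (inl i₀) v}
    have hS : ∀ i j, M.eraseEntry i₀ j₀ i j ≠ none → (inl i ∈ S ↔ inr j ∈ S) := fun i j hij =>
      have hadj : (signGraph (M.eraseEntry i₀ j₀)).Adj (inl i) (inr j) := hij
      ⟨fun h => h.trans hadj.reachable, fun h => h.trans hadj.symm.reachable⟩
    refine ⟨_, _, (hxy.shift_on hS (M.signLabel i₀ j₀ + x i₀ + y j₀)).of_eraseEntry ?_⟩
    rw [Set.indicator_of_mem (show inl i₀ ∈ S from SimpleGraph.Reachable.refl _),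
      Set.indicator_of_notMem (show inr j₀ ∉ S from hreach)]
    linear_combination -(x i₀ + y j₀) * (CharTwo.two_eq_zero : (2 : ZMod 2) = 0)

theorem exists_isPotential_of_signGraphCyclesEven {M : GMatrix k ℓ}
    (hcyc : SignGraphCyclesEven M) : ∃ x y, M.IsPotential x y := by
  suffices ∀ (S : Finset (Fin k × Fin ℓ)) (M : GMatrix k ℓ),
      (∀ i j, M i j ≠ none → (i, j) ∈ S) → SignGraphCyclesEven M → ∃ x y, M.IsPotential x y from
    this univ M (fun _ _ _ => mem_univ _) hcyc
  intro S
  induction S using Finset.induction_on with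
  | empty => exact fun M hM _ => ⟨0, 0, fun i j hij => absurd (hM i j hij) (notMem_empty _)⟩
  | insert a S _ ih =>
    intro M hM hcyc
    obtain ⟨i₀, j₀⟩ := a
    by_cases h₀ : M i₀ j₀ = none
    · refine ih M (fun i j hij => (mem_insert.mp (hM i j hij)).resolve_left ?_) hcyc
      rintro ⟨⟩
      exact hij h₀
    have hM' : ∀ i j, M.eraseEntry i₀ j₀ i j ≠ none → (i, j) ∈ S := fun i j hij => by
      refine (mem_insert.mp (hM i j (eraseEntry_eq_of_ne_none hij ▸ hij))).resolve_left ?_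
      rintro ⟨⟩
      exact hij (if_pos ⟨rfl, rfl⟩)
    obtain ⟨x, y, hxy⟩ := ih _ hM' (signGraphCyclesEven_eraseEntry hcyc i₀ j₀)
    exact exists_isPotential_of_eraseEntry hcyc h₀ hxy

end GMatrix

/-- If `M` has a consistent orientation then so does any matrix obtained from it by
column reversals and row complementations; moreover `M` has a consistent orientation
iff every cycle of its bipartite sign graph has an even number of `-1` (Dec) labels. -/
theorem consistentOrientation_flips_and_iff {k ℓ : ℕ} (M : GMatrix k ℓ) :
    (∀ (flipC : Fin k → Bool) (flipR : Fin ℓ → Bool),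
      HasConsistentOrientation M → HasConsistentOrientation (applyFlips M flipC flipR)) ∧
    (HasConsistentOrientation M ↔ SignGraphCyclesEven M) := by
  simp only [GMatrix.hasConsistentOrientation_iff_exists_isPotential]
  refine ⟨fun flipC flipR ⟨x, y, h⟩ => ⟨_, _, h.applyFlips flipC flipR⟩,
    fun ⟨_, _, h⟩ => h.signGraphCyclesEven, GMatrix.exists_isPotential_of_signGraphCyclesEven⟩
end

section
/- If a permutation class C contains, for every k, a monotone grid subclass whose cell graph is a path of length k (the long path property), then either C is the class of all permutations, or C contains for every k a monotone grid subclass whose cell graph is a proper-turning path of length k (a path in which no three consecutive vertices lie in the same row or column). -/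
/-- The point at position `p` of the permutation `π` lies in the `(i,j)`-cell of the
gridding given by column boundaries `c` and row boundaries `r`. -/
def InCell {n k ℓ : ℕ} (c : Fin (k + 1) → ℕ) (r : Fin (ℓ + 1) → ℕ)
    (π : Equiv.Perm (Fin n)) (p : Fin n) (i : Fin k) (j : Fin ℓ) : Prop :=
  c i.castSucc ≤ p.val ∧ p.val < c i.succ ∧
  r j.castSucc ≤ (π p).val ∧ (π p).val < r j.succ

/-- `(c, r)` is an `M`-gridding of the permutation `π`: every nonempty cell of the
gridding corresponds to a nonempty matrix entry, and the points in a cell with an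
Inc (resp. Dec) entry form an increasing (resp. decreasing) pattern. -/
def IsGridding {n k ℓ : ℕ} (M : GMatrix k ℓ) (π : Equiv.Perm (Fin n))
    (c : Fin (k + 1) → ℕ) (r : Fin (ℓ + 1) → ℕ) : Prop :=
  Monotone c ∧ Monotone r ∧ c 0 = 0 ∧ c (Fin.last k) = n ∧
  r 0 = 0 ∧ r (Fin.last ℓ) = n ∧
  ∀ (i : Fin k) (j : Fin ℓ),
    (∀ p, InCell c r π p i j → M i j ≠ none) ∧
    (M i j = some true → ∀ p q, InCell c r π p i j → InCell c r π q i j →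
      p < q → π p < π q) ∧
    (M i j = some false → ∀ p q, InCell c r π p i j → InCell c r π q i j →
      p < q → π q < π p)

/-- The monotone grid class of `M`, at length `n`: permutations admitting an
`M`-gridding. -/
def GridClass {k ℓ : ℕ} (M : GMatrix k ℓ) (n : ℕ) : Set (Equiv.Perm (Fin n)) :=
  {π | ∃ c r, IsGridding M π c r}
/-- The cell graph of `M` is a path of length `len`: the nonempty entries can be
enumerated as `v 0, …, v len` with adjacency exactly between consecutive entries. -/
def CellGraphIsPath {k ℓ : ℕ} (M : GMatrix k ℓ) (len : ℕ) : Prop :=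
  ∃ v : Fin (len + 1) → Fin k × Fin ℓ,
    Function.Injective v ∧
    (∀ x : Fin k × Fin ℓ, M x.1 x.2 ≠ none ↔ ∃ t, v t = x) ∧
    (∀ s t : Fin (len + 1),
      (cellGraph M).Adj (v s) (v t) ↔ (s.val + 1 = t.val ∨ t.val + 1 = s.val))

/-- The cell graph of `M` is a proper-turning path of length `len`: a path in which no
three vertices share a row or a column. -/
def CellGraphIsProperTurningPath {k ℓ : ℕ} (M : GMatrix k ℓ) (len : ℕ) : Prop :=
  ∃ v : Fin (len + 1) → Fin k × Fin ℓ,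
    Function.Injective v ∧
    (∀ x : Fin k × Fin ℓ, M x.1 x.2 ≠ none ↔ ∃ t, v t = x) ∧
    (∀ s t : Fin (len + 1),
      (cellGraph M).Adj (v s) (v t) ↔ (s.val + 1 = t.val ∨ t.val + 1 = s.val)) ∧
    (∀ s t u : Fin (len + 1), s ≠ t → t ≠ u → s ≠ u →
      ¬((v s).1 = (v t).1 ∧ (v t).1 = (v u).1) ∧
      ¬((v s).2 = (v t).2 ∧ (v t).2 = (v u).2))

/-- The long path property: for every `len`, the class `C` contains a monotone grid
subclass whose cell graph is a path of length `len`. -/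
def LPP (C : (n : ℕ) → Set (Equiv.Perm (Fin n))) : Prop :=
  ∀ len : ℕ, ∃ (k ℓ : ℕ) (M : GMatrix k ℓ),
    (∀ n, GridClass M n ⊆ C n) ∧ CellGraphIsPath M len

/-! If the grid subclasses of `C` have arbitrarily long rows or columns, `C` contains everything:
a row (or column) with `n` nonempty cells, one point in each, grids every permutation of
length `n`. Otherwise all their lines have fewer than `B` nonempty cells. As the cell graph is a
path, it traverses each line in one consecutive stretch, hence of fewer than `B` steps. Along a
path of length `len * B`, jumping each time to the farthest cell on a line through the current
one gives `len + 1` turning cells, where exactly the consecutive ones share a line; restricted to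
these cells the matrix has a proper-turning path as cell graph and a smaller grid class. -/

open Finset

def GMatrix.rowCells {k ℓ : ℕ} (M : GMatrix k ℓ) (j : Fin ℓ) : Finset (Fin k) :=
  {i | M i j ≠ none}

def GMatrix.colCells {k ℓ : ℕ} (M : GMatrix k ℓ) (i : Fin k) : Finset (Fin ℓ) :=
  {j | M i j ≠ none}

def GMatrix.transpose {k ℓ : ℕ} (M : GMatrix k ℓ) : GMatrix ℓ k := fun j i => M i j

open Classical in
noncomputable def GMatrix.restrict {k ℓ : ℕ} (M : GMatrix k ℓ) (S : Set (Fin k × Fin ℓ)) :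
    GMatrix k ℓ :=
  fun i j => if (i, j) ∈ S then M i j else none

lemma restrict_ne_none_iff {k ℓ : ℕ} {M : GMatrix k ℓ} {S : Set (Fin k × Fin ℓ)}
    (hS : ∀ x ∈ S, M x.1 x.2 ≠ none) (x : Fin k × Fin ℓ) :
    M.restrict S x.1 x.2 ≠ none ↔ x ∈ S := by
  by_cases hx : x ∈ S <;> simp [GMatrix.restrict, hx, hS]

section GridClass

variable {n k ℓ : ℕ}

/-- Column (or row) boundaries of the gridding that puts position (or value) `p` into column
(or row) `X p`. -/
def cellBoundary (X : Fin n → Fin k) (i : Fin (k + 1)) : ℕ := #{q | (X q : ℕ) < i}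

lemma monotone_cellBoundary (X : Fin n → Fin k) : Monotone (cellBoundary X) := fun _ _ hab =>
  card_le_card fun q hq => by
    simp only [mem_filter, mem_univ, true_and] at hq ⊢
    exact hq.trans_le hab

lemma cellBoundary_zero (X : Fin n → Fin k) : cellBoundary X 0 = 0 := by
  simp [cellBoundary]

lemma cellBoundary_last (X : Fin n → Fin k) : cellBoundary X (Fin.last k) = n := by
  simp [cellBoundary]

lemma lt_cellBoundary_iff {X : Fin n → Fin k} (hX : Monotone X) (p : Fin n) (i : Fin (k + 1)) :
    p.val < cellBoundary X i ↔ (X p : ℕ) < i := by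
  unfold cellBoundary
  constructor
  · intro hp
    by_contra! hpi
    have hsub : ({q | (X q : ℕ) < i} : Finset (Fin n)) ⊆ Iio p := fun q hq => by
      simp only [mem_filter, mem_univ, true_and, mem_Iio] at hq ⊢
      by_contra! hpq
      have := hX hpq
      omega
    have := card_le_card hsub
    rw [Fin.card_Iio] at this
    omega
  · intro hpi
    have hsub : Iic p ⊆ ({q | (X q : ℕ) < i} : Finset (Fin n)) := fun q hq => by
      simp only [mem_filter, mem_univ, true_and, mem_Iic] at hq ⊢
      have := hX hq
      omega
    simpa using card_le_card hsub

lemma inCell_cellBoundary_iff {X : Fin n → Fin k} {Y : Fin n → Fin ℓ} (hX : Monotone X)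
    (hY : Monotone Y) (π : Equiv.Perm (Fin n)) (p : Fin n) (i : Fin k) (j : Fin ℓ) :
    InCell (cellBoundary X) (cellBoundary Y) π p i j ↔ X p = i ∧ Y (π p) = j := by
  simp only [InCell, ← not_lt, lt_cellBoundary_iff hX, lt_cellBoundary_iff hY, Fin.val_castSucc,
    Fin.val_succ, Fin.ext_iff]
  omega

lemma mem_gridClass_of_monotone {M : GMatrix k ℓ} {X : Fin n → Fin k} {Y : Fin n → Fin ℓ}
    (hX : Monotone X) (hY : Monotone Y) (π : Equiv.Perm (Fin n))
    (hinj : Function.Injective fun p => (X p, Y (π p)))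
    (hne : ∀ p, M (X p) (Y (π p)) ≠ none) :
    π ∈ GridClass M n := by
  refine ⟨cellBoundary X, cellBoundary Y, monotone_cellBoundary X, monotone_cellBoundary Y,
    cellBoundary_zero X, cellBoundary_last X, cellBoundary_zero Y, cellBoundary_last Y,
    fun i j => ?_⟩
  simp only [inCell_cellBoundary_iff hX hY]
  have hsingle : ∀ p q, (X p = i ∧ Y (π p) = j) → (X q = i ∧ Y (π q) = j) → p = q :=
    fun p q hp hq => hinj (by simp [hp, hq])
  refine ⟨fun p ⟨hi, hj⟩ => hi ▸ hj ▸ hne p, fun _ p q hp hq hpq => ?_,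
    fun _ p q hp hq hpq => ?_⟩ <;> exact absurd (hsingle p q hp hq) hpq.ne

lemma exists_strictMono_mem {m : ℕ} {s : Finset (Fin m)} (h : n ≤ #s) :
    ∃ X : Fin n → Fin m, StrictMono X ∧ ∀ p, X p ∈ s :=
  ⟨(Fin.castLEOrderEmb h).trans (s.orderEmbOfFin rfl), OrderEmbedding.strictMono _,
    fun _ => s.orderEmbOfFin_mem rfl _⟩

lemma mem_gridClass_of_le_card_rowCells {M : GMatrix k ℓ} {j : Fin ℓ}
    (h : n ≤ #(M.rowCells j)) (π : Equiv.Perm (Fin n)) : π ∈ GridClass M n := by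
  obtain ⟨X, hX, hXmem⟩ := exists_strictMono_mem h
  refine mem_gridClass_of_monotone (Y := fun _ => j) hX.monotone monotone_const π
    (fun p q hpq => hX.injective (Prod.ext_iff.1 hpq).1) fun p => ?_
  simpa [GMatrix.rowCells] using hXmem p

lemma mem_gridClass_of_le_card_colCells {M : GMatrix k ℓ} {i : Fin k}
    (h : n ≤ #(M.colCells i)) (π : Equiv.Perm (Fin n)) : π ∈ GridClass M n := by
  obtain ⟨Y, hY, hYmem⟩ := exists_strictMono_mem h
  refine mem_gridClass_of_monotone (X := fun _ => i) monotone_const hY.monotone π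
    (fun p q hpq => π.injective (hY.injective (Prod.ext_iff.1 hpq).2)) fun p => ?_
  simpa [GMatrix.colCells] using hYmem (π p)

lemma gridClass_restrict_subset (M : GMatrix k ℓ) (S : Set (Fin k × Fin ℓ)) :
    GridClass (M.restrict S) n ⊆ GridClass M n := by
  rintro π ⟨c, r, hc, hr, hc0, hcl, hr0, hrl, hcell⟩
  have hagree : ∀ i j, M.restrict S i j ≠ none → M.restrict S i j = M i j := fun i j h => by
    by_cases hij : (i, j) ∈ S <;> simp_all [GMatrix.restrict]
  refine ⟨c, r, hc, hr, hc0, hcl, hr0, hrl, fun i j => ?_⟩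
  obtain ⟨hne, hinc, hdec⟩ := hcell i j
  refine ⟨fun p hp => hagree i j (hne p hp) ▸ hne p hp, fun hM p q hp hq => ?_,
    fun hM p q hp hq => ?_⟩
  · exact hinc (hagree i j (hne p hp) ▸ hM) p q hp hq
  · exact hdec (hagree i j (hne p hp) ▸ hM) p q hp hq

end GridClass

def SameLine {k ℓ : ℕ} (x y : Fin k × Fin ℓ) : Prop := x.1 = y.1 ∨ x.2 = y.2

lemma SameLine.symm {k ℓ : ℕ} {x y : Fin k × Fin ℓ} (h : SameLine x y) : SameLine y x :=
  h.imp Eq.symm Eq.symm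

section CellGraph

variable {k ℓ : ℕ} {M : GMatrix k ℓ}

lemma sameLine_of_cellGraph_adj {x y : Fin k × Fin ℓ} (h : (cellGraph M).Adj x y) :
    SameLine x y := by
  rw [cellGraph, SimpleGraph.fromRel_adj] at h
  rcases h.2 with ⟨_, _, hc | hc⟩ | ⟨_, _, hc | hc⟩
  exacts [Or.inl hc.1, Or.inr hc.1, Or.inl hc.1.symm, Or.inr hc.1.symm]

lemma cellGraph_adj_of_fst_eq {x y : Fin k × Fin ℓ} (hx : M x.1 x.2 ≠ none)
    (hy : M y.1 y.2 ≠ none) (hcol : x.1 = y.1) (hlt : x.2 < y.2)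
    (hbetween : ∀ j, x.2 < j → j < y.2 → M x.1 j = none) : (cellGraph M).Adj x y := by
  rw [cellGraph, SimpleGraph.fromRel_adj]
  exact ⟨fun h => hlt.ne (congrArg Prod.snd h),
    Or.inl ⟨hx, hy, Or.inl ⟨hcol, hlt, hbetween⟩⟩⟩

lemma cellGraph_adj_of_snd_eq {x y : Fin k × Fin ℓ} (hx : M x.1 x.2 ≠ none)
    (hy : M y.1 y.2 ≠ none) (hrow : x.2 = y.2) (hlt : x.1 < y.1)
    (hbetween : ∀ i, x.1 < i → i < y.1 → M i x.2 = none) : (cellGraph M).Adj x y := by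
  rw [cellGraph, SimpleGraph.fromRel_adj]
  exact ⟨fun h => hlt.ne (congrArg Prod.fst h),
    Or.inl ⟨hx, hy, Or.inr ⟨hrow, hlt, hbetween⟩⟩⟩

lemma cellGraph_adj_of_sameLine {x y : Fin k × Fin ℓ} (hxy : x ≠ y) (hx : M x.1 x.2 ≠ none)
    (hy : M y.1 y.2 ≠ none) (h : SameLine x y)
    (honly : ∀ z : Fin k × Fin ℓ, M z.1 z.2 ≠ none → SameLine x z → SameLine y z →
      z = x ∨ z = y) :
    (cellGraph M).Adj x y := by
  rcases h with hcol | hrow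
  · have hempty : ∀ j, j ≠ x.2 → j ≠ y.2 → M x.1 j = none := fun j hjx hjy => by
      by_contra hj
      rcases honly (x.1, j) hj (.inl rfl) (.inl hcol.symm) with h | h
      exacts [hjx (congrArg Prod.snd h), hjy (congrArg Prod.snd h)]
    rcases lt_or_gt_of_ne fun h => hxy (Prod.ext hcol h) with hlt | hlt
    · exact cellGraph_adj_of_fst_eq hx hy hcol hlt fun j h₁ h₂ => hempty j h₁.ne' h₂.ne
    · exact (cellGraph_adj_of_fst_eq hy hx hcol.symm hlt fun j h₁ h₂ =>
        hcol ▸ hempty j h₂.ne h₁.ne').symm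
  · have hempty : ∀ i, i ≠ x.1 → i ≠ y.1 → M i x.2 = none := fun i hix hiy => by
      by_contra hi
      rcases honly (i, x.2) hi (.inr rfl) (.inr hrow.symm) with h | h
      exacts [hix (congrArg Prod.fst h), hiy (congrArg Prod.fst h)]
    rcases lt_or_gt_of_ne fun h => hxy (Prod.ext h hrow) with hlt | hlt
    · exact cellGraph_adj_of_snd_eq hx hy hrow hlt fun i h₁ h₂ => hempty i h₁.ne' h₂.ne
    · exact (cellGraph_adj_of_snd_eq hy hx hrow.symm hlt fun i h₁ h₂ =>
        hrow ▸ hempty i h₂.ne h₁.ne').symm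

lemma cellGraph_transpose_adj_swap {x y : Fin k × Fin ℓ} :
    (cellGraph M.transpose).Adj x.swap y.swap ↔ (cellGraph M).Adj x y := by
  simp only [cellGraph, SimpleGraph.fromRel_adj, GMatrix.transpose, Prod.fst_swap,
    Prod.snd_swap, ne_eq, Prod.swap_inj]
  constructor <;> rintro ⟨hne, h⟩ <;> refine ⟨hne, ?_⟩ <;> tauto

end CellGraph

/-- `CellGraphIsPath M T` is `∃ v, IsCellPath M v`. -/
structure IsCellPath {k ℓ T : ℕ} (M : GMatrix k ℓ) (v : Fin (T + 1) → Fin k × Fin ℓ) :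
    Prop where
  injective : Function.Injective v
  ne_none_iff : ∀ x : Fin k × Fin ℓ, M x.1 x.2 ≠ none ↔ ∃ t, v t = x
  adj_iff : ∀ s t, (cellGraph M).Adj (v s) (v t) ↔ (s.val + 1 = t.val ∨ t.val + 1 = s.val)

namespace IsCellPath

variable {k ℓ T B : ℕ} {M : GMatrix k ℓ} {v : Fin (T + 1) → Fin k × Fin ℓ}

lemma ne_none (hv : IsCellPath M v) (t : Fin (T + 1)) : M (v t).1 (v t).2 ≠ none :=
  (hv.ne_none_iff _).2 ⟨t, rfl⟩

lemma transpose (hv : IsCellPath M v) : IsCellPath M.transpose (Prod.swap ∘ v) where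
  injective := Prod.swap_injective.comp hv.injective
  ne_none_iff x := by
    rw [show M.transpose x.1 x.2 = M x.swap.1 x.swap.2 from rfl, hv.ne_none_iff]
    exact exists_congr fun t => by rw [Function.comp_apply, Prod.swap_eq_iff_eq_swap]
  adj_iff s t := by rw [Function.comp_apply, Function.comp_apply, cellGraph_transpose_adj_swap,
    hv.adj_iff]

lemma fst_eq_of_mem_uIcc (hv : IsCellPath M v) {a b s : Fin (T + 1)} (hab : (v a).1 = (v b).1)
    (hs : s ∈ Set.uIcc a b) : (v s).1 = (v a).1 := by
  wlog hle : (v a).2 ≤ (v b).2 generalizing a b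
  · rw [this hab.symm (Set.uIcc_comm a b ▸ hs) (not_le.1 hle).le, hab]
  induction hd : ((v b).2 : ℕ) - (v a).2 using Nat.strong_induction_on generalizing a b s with
  | _ d ih =>
  by_cases hmid : ∃ j, (v a).2 < j ∧ j < (v b).2 ∧ M (v a).1 j ≠ none
  · obtain ⟨j, haj, hjb, hj⟩ := hmid
    obtain ⟨c, hc⟩ := (hv.ne_none_iff ((v a).1, j)).1 hj
    have hca : (v c).1 = (v a).1 := by rw [hc]
    have hcj : (v c).2 = j := by rw [hc]
    rcases Set.uIcc_subset_uIcc_union_uIcc hs with hs | hs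
    · exact ih _ (by omega) hca.symm hs (by omega) rfl
    · rw [ih _ (by omega) (hca.trans hab) hs (by omega) rfl, hca]
  · push Not at hmid
    rcases hle.lt_or_eq with hlt | heq
    · have hadj := (hv.adj_iff a b).1 (cellGraph_adj_of_fst_eq (hv.ne_none a) (hv.ne_none b)
        hab hlt hmid)
      rw [Set.mem_uIcc] at hs
      obtain rfl | rfl : s = a ∨ s = b := by omega
      exacts [rfl, hab.symm]
    · obtain rfl := hv.injective (Prod.ext hab heq)
      rw [Set.uIcc_self, Set.mem_singleton_iff] at hs
      rw [hs]

lemma lt_add_of_fst_eq (hv : IsCellPath M v) (hcol : ∀ i, #(M.colCells i) < B)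
    {p e : Fin (T + 1)} (hpe : p ≤ e) (h : (v p).1 = (v e).1) : e.val < p.val + B := by
  have hsame : ∀ s ∈ Icc p e, (v s).1 = (v p).1 := fun s hs =>
    hv.fst_eq_of_mem_uIcc h (Set.Icc_subset_uIcc (by simpa using hs))
  have hcard : #(Icc p e) ≤ #(M.colCells (v p).1) := by
    refine card_le_card_of_injOn (fun s => (v s).2) (fun s hs => ?_) fun s hs s' hs' hss' => ?_
    · simpa [GMatrix.colCells, ← hsame s hs] using hv.ne_none s
    · exact hv.injective (Prod.ext ((hsame s hs).trans (hsame s' hs').symm) hss')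
  have := hcol (v p).1
  rw [Fin.card_Icc] at hcard
  omega

lemma lt_add_of_snd_eq (hv : IsCellPath M v) (hrow : ∀ j, #(M.rowCells j) < B)
    {p e : Fin (T + 1)} (hpe : p ≤ e) (h : (v p).2 = (v e).2) : e.val < p.val + B :=
  hv.transpose.lt_add_of_fst_eq hrow hpe h

end IsCellPath

/-- Greedy choice of turning points: from each chosen index jump to the farthest index related
to it. -/
lemma exists_strictMono_turning {T B : ℕ} (len : ℕ) (hT : len * B ≤ T)
    (L : Fin (T + 1) → Fin (T + 1) → Prop) (hrefl : ∀ p, L p p)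
    (hsucc : ∀ p q : Fin (T + 1), p.val + 1 = q.val → L p q)
    (hbound : ∀ p e, p ≤ e → L p e → e.val < p.val + B) :
    ∃ f : Fin (len + 1) → Fin (T + 1), StrictMono f ∧
      (∀ i : Fin len, L (f i.castSucc) (f i.succ)) ∧
      ∀ s t, s < t → L (f s) (f t) → t.val = s.val + 1 := by
  classical
  let reach (p : Fin (T + 1)) : Finset (Fin (T + 1)) := {e | p ≤ e ∧ L p e}
  have hreach : ∀ p, (reach p).Nonempty := fun p => ⟨p, by simp [reach, hrefl]⟩
  let g p := (reach p).max' (hreach p)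
  have hg : ∀ p, p ≤ g p ∧ L p (g p) := fun p => by
    simpa [reach] using (reach p).max'_mem (hreach p)
  have le_g : ∀ p e, p ≤ e → L p e → e ≤ g p := fun p e hpe hL =>
    (reach p).le_max' e (by simp [reach, hpe, hL])
  have lt_g : ∀ p : Fin (T + 1), p.val < T → p < g p := fun p hp =>
    lt_of_lt_of_le (Fin.lt_def.2 (Nat.lt_succ_self p.val))
      (le_g p ⟨p.val + 1, by omega⟩ (by simp [Fin.le_def]) (hsucc _ _ rfl))
  let F (i : ℕ) : Fin (T + 1) := g^[i] 0
  have hF : ∀ i, F (i + 1) = g (F i) := fun i => Function.iterate_succ_apply' g i 0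
  have hF_le : ∀ i, (F i).val ≤ i * B := fun i => by
    induction i with
    | zero => simp [F]
    | succ i ih =>
      have := hbound _ _ (hg (F i)).1 (hg (F i)).2
      rw [hF, Nat.succ_mul]
      omega
  have hF_lt : ∀ i < len, F i < F (i + 1) := fun i hi => by
    have hB : 0 < B := by have := hbound 0 0 le_rfl (hrefl 0); omega
    have : i * B + B ≤ len * B := by rw [← Nat.succ_mul]; exact Nat.mul_le_mul_right B hi
    rw [hF]
    exact lt_g _ (by have := hF_le i; omega)
  have hmono : StrictMono fun i : Fin (len + 1) => F i :=
    Fin.strictMono_iff_lt_succ.2 fun i => hF_lt i i.isLt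
  refine ⟨fun i => F i, hmono, fun i => ?_, fun s t hst hL => ?_⟩
  · simpa [hF] using (hg (F i)).2
  · by_contra hne
    have hle : F t ≤ F (s + 1) := hF s ▸ le_g _ _ (hmono hst).le hL
    have hlt : (⟨s + 1, by omega⟩ : Fin (len + 1)) < t := Fin.lt_def.2 (by simp only; omega)
    exact (hmono hlt).not_ge hle

lemma cellGraphIsProperTurningPath_restrict_range {k ℓ len : ℕ} {M : GMatrix k ℓ}
    {w : Fin (len + 1) → Fin k × Fin ℓ} (hinj : Function.Injective w)
    (hne : ∀ t, M (w t).1 (w t).2 ≠ none)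
    (hcons : ∀ i : Fin len, SameLine (w i.castSucc) (w i.succ))
    (hturn : ∀ s t, s < t → SameLine (w s) (w t) → t.val = s.val + 1) :
    CellGraphIsProperTurningPath (M.restrict (Set.range w)) len := by
  set M' := M.restrict (Set.range w)
  have hne_iff : ∀ x : Fin k × Fin ℓ, M' x.1 x.2 ≠ none ↔ ∃ t, w t = x := fun x =>
    restrict_ne_none_iff (S := Set.range w) (by rintro _ ⟨t, rfl⟩; exact hne t) x
  have hnear : ∀ s t, SameLine (w s) (w t) →
      s.val = t.val ∨ s.val + 1 = t.val ∨ t.val + 1 = s.val :=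
    fun s t h => by
      rcases lt_trichotomy s t with hst | rfl | hts
      · exact Or.inr (Or.inl (hturn s t hst h).symm)
      · exact Or.inl rfl
      · exact Or.inr (Or.inr (hturn t s hts h.symm).symm)
  have hadj_succ : ∀ s t, s.val + 1 = t.val → (cellGraph M').Adj (w s) (w t) := by
    intro s t hst
    refine cellGraph_adj_of_sameLine (fun h => by have := hinj h; omega)
      ((hne_iff _).2 ⟨s, rfl⟩) ((hne_iff _).2 ⟨t, rfl⟩) ?_ fun x hx hsx htx => ?_
    · convert hcons ⟨s.val, by omega⟩ using 2 <;> ext <;> simp [hst]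
    · obtain ⟨u, rfl⟩ := (hne_iff x).1 hx
      have := hnear s u hsx
      have := hnear t u htx
      obtain rfl | rfl : u = s ∨ u = t := by omega
      exacts [Or.inl rfl, Or.inr rfl]
  have hno_three : ∀ s t u, s ≠ t → t ≠ u → s ≠ u → SameLine (w s) (w t) →
      SameLine (w t) (w u) → SameLine (w s) (w u) → False := fun s t u _ _ _ hst htu hsu => by
    have := hnear s t hst
    have := hnear t u htu
    have := hnear s u hsu
    omega
  refine ⟨w, hinj, hne_iff, fun s t => ⟨fun h => ?_, ?_⟩, fun s t u hst htu hsu => ?_⟩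
  · have := hnear s t (sameLine_of_cellGraph_adj h)
    have : s ≠ t := fun hst => (cellGraph M').ne_of_adj h (congrArg w hst)
    omega
  · rintro (h | h)
    exacts [hadj_succ s t h, (hadj_succ t s h).symm]
  · have := hno_three s t u hst htu hsu
    exact ⟨fun ⟨h₁, h₂⟩ => this (.inl h₁) (.inl h₂) (.inl (h₁.trans h₂)),
      fun ⟨h₁, h₂⟩ => this (.inr h₁) (.inr h₂) (.inr (h₁.trans h₂))⟩

lemma IsCellPath.exists_restrict_properTurning {k ℓ T B : ℕ} {M : GMatrix k ℓ}
    {v : Fin (T + 1) → Fin k × Fin ℓ} (hv : IsCellPath M v) (hrow : ∀ j, #(M.rowCells j) < B)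
    (hcol : ∀ i, #(M.colCells i) < B) (len : ℕ) (hT : len * B ≤ T) :
    ∃ S, CellGraphIsProperTurningPath (M.restrict S) len := by
  obtain ⟨f, hf, hcons, hturn⟩ :=
    exists_strictMono_turning len hT (fun p e => SameLine (v p) (v e)) (fun p => Or.inl rfl)
    (fun p q hpq => sameLine_of_cellGraph_adj ((hv.adj_iff p q).2 (Or.inl hpq)))
    (fun p e hpe => Or.rec (hv.lt_add_of_fst_eq hcol hpe) (hv.lt_add_of_snd_eq hrow hpe))
  exact ⟨_, cellGraphIsProperTurningPath_restrict_range (hv.injective.comp hf.injective)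
    (fun t => hv.ne_none (f t)) hcons hturn⟩

/-- If a class `C` has the long path property, then either `C` is the class of all
permutations, or `C` contains, for every `len`, a monotone grid subclass whose cell
graph is a proper-turning path of length `len`. -/
theorem lpp_all_or_properTurning (C : (n : ℕ) → Set (Equiv.Perm (Fin n))) (hC : LPP C) :
    (∀ n, ∀ π : Equiv.Perm (Fin n), π ∈ C n) ∨
    (∀ len : ℕ, ∃ (k ℓ : ℕ) (M : GMatrix k ℓ),
      (∀ n, GridClass M n ⊆ C n) ∧ CellGraphIsProperTurningPath M len) := by
  by_cases hlong : ∀ n, ∃ (k ℓ : ℕ) (M : GMatrix k ℓ), (∀ m, GridClass M m ⊆ C m) ∧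
      ((∃ j, n ≤ #(M.rowCells j)) ∨ (∃ i, n ≤ #(M.colCells i)))
  · left
    intro n π
    obtain ⟨k, ℓ, M, hMC, ⟨j, hj⟩ | ⟨i, hi⟩⟩ := hlong n
    exacts [hMC n (mem_gridClass_of_le_card_rowCells hj π),
      hMC n (mem_gridClass_of_le_card_colCells hi π)]
  · right
    push Not at hlong
    obtain ⟨B, hB⟩ := hlong
    intro len
    obtain ⟨k, ℓ, M, hMC, v, hinj, himg, hadj⟩ := hC (len * B)
    obtain ⟨hrow, hcol⟩ := hB k ℓ M hMC
    obtain ⟨S, hS⟩ :=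
      IsCellPath.exists_restrict_properTurning ⟨hinj, himg, hadj⟩ hrow hcol len le_rfl
    exact ⟨k, ℓ, M.restrict S, fun n => (gridClass_restrict_subset M S).trans (hMC n), hS⟩
end

section
/- A graph containing a vertex of degree at least 3 is not representable in Av(3412); i.e., if M is a monotone gridding matrix with Grid(M) ⊆ Av(3412), then every vertex of the cell graph G_M has degree at most 2. -/
/-- `π` contains the pattern `σ`: some subsequence of `π` is order-isomorphic to `σ`. -/
def Contains {n m : ℕ} (π : Equiv.Perm (Fin n)) (σ : Equiv.Perm (Fin m)) : Prop :=
  ∃ f : Fin m → Fin n, StrictMono f ∧ ∀ a b : Fin m, σ a < σ b ↔ π (f a) < π (f b)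

/-- The pattern 3412 (as a permutation of `Fin 4`, 0-indexed values `2,3,0,1`). -/
def perm3412 : Equiv.Perm (Fin 4) := Equiv.addRight (2 : Fin 4)

open Finset in
/-- boundaries from a monotone labelling -/
lemma bnd_mem {m : ℕ} (g : Fin 4 → Fin m) (hg : Monotone g) (p : Fin 4) :
    ((univ.filter fun q : Fin 4 => (g q : ℕ) < ((g p).castSucc : ℕ)).card ≤ (p : ℕ) ∧
     ((p : ℕ) < (univ.filter fun q : Fin 4 => (g q : ℕ) < ((g p).succ : ℕ)).card)) := by
  constructor
  · calc (univ.filter fun q : Fin 4 => (g q : ℕ) < ((g p).castSucc : ℕ)).card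
        ≤ (Iio p).card := by
          apply card_le_card
          intro q hq
          simp only [mem_filter, Fin.coe_castSucc] at hq
          simp only [mem_Iio]
          by_contra hc
          exact absurd (hg (not_lt.mp hc)) (not_le.mpr hq.2)
      _ = (p : ℕ) := Fin.card_Iio p
  · calc (p : ℕ) < (Iic p).card := by rw [Fin.card_Iic]; omega
      _ ≤ _ := by
          apply card_le_card
          intro q hq
          simp only [mem_Iic] at hq
          simp only [mem_filter, Fin.val_succ]
          exact ⟨mem_univ q, by have := hg hq; omega⟩

open Finset in
lemma key {k ℓ : ℕ} (M : GMatrix k ℓ) (col : Fin 4 → Fin k) (rv : Fin 4 → Fin ℓ)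
    (hcol : Monotone col) (hrv : Monotone rv)
    (hne : ∀ p : Fin 4, M (col p) (rv (perm3412 p)) ≠ none)
    (hinj : Function.Injective (fun p : Fin 4 => (col p, rv (perm3412 p)))) :
    perm3412 ∈ GridClass M 4 := by
  set π := perm3412 with hπ
  refine ⟨fun i => (univ.filter fun q : Fin 4 => ((col q : ℕ) < (i : ℕ))).card,
          fun j => (univ.filter fun q : Fin 4 => ((rv q : ℕ) < (j : ℕ))).card,
          ?_, ?_, ?_, ?_, ?_, ?_, ?_⟩
  · intro a b hab
    exact card_le_card (fun q hq => by
      simp only [mem_filter] at hq ⊢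
      exact ⟨hq.1, lt_of_lt_of_le hq.2 hab⟩)
  · intro a b hab
    exact card_le_card (fun q hq => by
      simp only [mem_filter] at hq ⊢
      exact ⟨hq.1, lt_of_lt_of_le hq.2 hab⟩)
  · simp
  · dsimp only; rw [filter_true_of_mem, card_univ] <;> simp [Fin.is_lt]
  · simp
  · dsimp only; rw [filter_true_of_mem, card_univ] <;> simp [Fin.is_lt]
  · -- main cell conditions
    -- first: identify cell of a point
    have hcell : ∀ (p : Fin 4) (i : Fin k) (j : Fin ℓ),
        InCell (fun i => (univ.filter fun q : Fin 4 => ((col q : ℕ) < (i : ℕ))).card)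
          (fun j => (univ.filter fun q : Fin 4 => ((rv q : ℕ) < (j : ℕ))).card)
          π p i j → i = col p ∧ j = rv (π p) := by
      intro p i j hic
      obtain ⟨h1, h2, h3, h4⟩ := hic
      dsimp only at h1 h2 h3 h4
      have hb1 := bnd_mem col hcol p
      have hb2 := bnd_mem rv hrv (π p)
      constructor
      · by_contra hne'
        rcases lt_or_gt_of_ne (fun hv => hne' (Fin.ext hv) : (i : ℕ) ≠ (col p : ℕ)) with hlt | hgt
        · -- i < col p : p < c i.succ ≤ c (col p).castSucc ≤ p
          have hmono : (univ.filter fun q : Fin 4 => ((col q : ℕ) < ((i.succ : Fin (k+1)) : ℕ))).card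
              ≤ (univ.filter fun q : Fin 4 => ((col q : ℕ) < (((col p).castSucc : Fin (k+1)) : ℕ))).card := by
            apply card_le_card; intro q hq
            simp only [mem_filter, Fin.val_succ, Fin.coe_castSucc] at hq ⊢
            exact ⟨hq.1, by omega⟩
          omega
        · have hmono : (univ.filter fun q : Fin 4 => ((col q : ℕ) < (((col p).succ : Fin (k+1)) : ℕ))).card
              ≤ (univ.filter fun q : Fin 4 => ((col q : ℕ) < ((i.castSucc : Fin (k+1)) : ℕ))).card := by
            apply card_le_card; intro q hq
            simp only [mem_filter, Fin.val_succ, Fin.coe_castSucc] at hq ⊢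
            exact ⟨hq.1, by omega⟩
          omega
      · by_contra hne'
        rcases lt_or_gt_of_ne (fun hv => hne' (Fin.ext hv) : (j : ℕ) ≠ (rv (π p) : ℕ)) with hlt | hgt
        · have hmono : (univ.filter fun q : Fin 4 => ((rv q : ℕ) < ((j.succ : Fin (ℓ+1)) : ℕ))).card
              ≤ (univ.filter fun q : Fin 4 => ((rv q : ℕ) < (((rv (π p)).castSucc : Fin (ℓ+1)) : ℕ))).card := by
            apply card_le_card; intro q hq
            simp only [mem_filter, Fin.val_succ, Fin.coe_castSucc] at hq ⊢
            exact ⟨hq.1, by omega⟩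
          omega
        · have hmono : (univ.filter fun q : Fin 4 => ((rv q : ℕ) < (((rv (π p)).succ : Fin (ℓ+1)) : ℕ))).card
              ≤ (univ.filter fun q : Fin 4 => ((rv q : ℕ) < ((j.castSucc : Fin (ℓ+1)) : ℕ))).card := by
            apply card_le_card; intro q hq
            simp only [mem_filter, Fin.val_succ, Fin.coe_castSucc] at hq ⊢
            exact ⟨hq.1, by omega⟩
          omega
    intro i j
    refine ⟨?_, ?_, ?_⟩
    · intro p hp
      obtain ⟨hi, hj⟩ := hcell p i j hp
      subst hi; subst hj; exact hne p
    · intro _ p q hp hq hpq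
      obtain ⟨hi, hj⟩ := hcell p i j hp
      obtain ⟨hi', hj'⟩ := hcell q i j hq
      have : p = q := hinj (by simp [← hi, ← hi', ← hj, ← hj'])
      exact absurd this (ne_of_lt hpq)
    · intro _ p q hp hq hpq
      obtain ⟨hi, hj⟩ := hcell p i j hp
      obtain ⟨hi', hj'⟩ := hcell q i j hq
      have : p = q := hinj (by simp [← hi, ← hi', ← hj, ← hj'])
      exact absurd this (ne_of_lt hpq)

/-- direction of a neighbor: 0 = up, 1 = down, 2 = right, 3 = left -/
def DirP {k ℓ : ℕ} (M : GMatrix k ℓ) (x y : Fin k × Fin ℓ) (d : ℕ) : Prop :=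
  match d with
  | 0 => y.1 = x.1 ∧ x.2 < y.2 ∧ M y.1 y.2 ≠ none ∧ ∀ j, x.2 < j → j < y.2 → M x.1 j = none
  | 1 => y.1 = x.1 ∧ y.2 < x.2 ∧ M y.1 y.2 ≠ none ∧ ∀ j, y.2 < j → j < x.2 → M x.1 j = none
  | 2 => y.2 = x.2 ∧ x.1 < y.1 ∧ M y.1 y.2 ≠ none ∧ ∀ i, x.1 < i → i < y.1 → M i x.2 = none
  | 3 => y.2 = x.2 ∧ y.1 < x.1 ∧ M y.1 y.2 ≠ none ∧ ∀ i, y.1 < i → i < x.1 → M i x.2 = none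
  | _ => False

lemma classify {k ℓ : ℕ} (M : GMatrix k ℓ) (x y : Fin k × Fin ℓ)
    (h : (cellGraph M).Adj x y) : (M x.1 x.2 ≠ none) ∧ ∃ d < 4, DirP M x y d := by
  rw [cellGraph, SimpleGraph.fromRel_adj] at h
  obtain ⟨hne, h | h⟩ := h
  · obtain ⟨hx, hy, h | h⟩ := h
    · exact ⟨hx, 0, by omega, h.1.symm, h.2.1, hy, h.2.2⟩
    · exact ⟨hx, 2, by omega, h.1.symm, h.2.1, hy, h.2.2⟩
  · obtain ⟨hy, hx, h | h⟩ := h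
    · exact ⟨hx, 1, by omega, by rw [h.1], h.2.1, hy, fun j h1 h2 => by rw [← h.1]; exact h.2.2 j h1 h2⟩
    · exact ⟨hx, 3, by omega, by rw [h.1], h.2.1, hy, fun i h1 h2 => by rw [← h.1]; exact h.2.2 i h1 h2⟩

lemma dir_unique {k ℓ : ℕ} (M : GMatrix k ℓ) (x y y' : Fin k × Fin ℓ) (d : ℕ)
    (h : DirP M x y d) (h' : DirP M x y' d) : y = y' := by
  match d with
  | 0 =>
    obtain ⟨e1, l1, n1, b1⟩ := h; obtain ⟨e1', l1', n1', b1'⟩ := h'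
    rcases lt_trichotomy y.2 y'.2 with hc | hc | hc
    · exact absurd (e1 ▸ b1' y.2 l1 hc) n1
    · exact Prod.ext (e1.trans e1'.symm) hc
    · exact absurd (e1' ▸ b1 y'.2 l1' hc) n1'
  | 1 =>
    obtain ⟨e1, l1, n1, b1⟩ := h; obtain ⟨e1', l1', n1', b1'⟩ := h'
    rcases lt_trichotomy y.2 y'.2 with hc | hc | hc
    · exact absurd (e1' ▸ b1 y'.2 hc l1') n1'
    · exact Prod.ext (e1.trans e1'.symm) hc
    · exact absurd (e1 ▸ b1' y.2 hc l1) n1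
  | 2 =>
    obtain ⟨e1, l1, n1, b1⟩ := h; obtain ⟨e1', l1', n1', b1'⟩ := h'
    rcases lt_trichotomy y.1 y'.1 with hc | hc | hc
    · exact absurd (e1 ▸ b1' y.1 l1 hc) n1
    · exact Prod.ext hc (e1.trans e1'.symm)
    · exact absurd (e1' ▸ b1 y'.1 l1' hc) n1'
  | 3 =>
    obtain ⟨e1, l1, n1, b1⟩ := h; obtain ⟨e1', l1', n1', b1'⟩ := h'
    rcases lt_trichotomy y.1 y'.1 with hc | hc | hc
    · exact absurd (e1' ▸ b1 y'.1 hc l1') n1'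
    · exact Prod.ext hc (e1.trans e1'.symm)
    · exact absurd (e1 ▸ b1' y.1 hc l1) n1
  | (n+4) => exact absurd h (by simp [DirP])

lemma case1 {k ℓ : ℕ} (M : GMatrix k ℓ) (i iL iR : Fin k) (j jU : Fin ℓ)
    (h1 : iL < i) (h2 : i < iR) (h3 : j < jU)
    (hx : M i j ≠ none) (hL : M iL j ≠ none) (hR : M iR j ≠ none) (hU : M i jU ≠ none) :
    perm3412 ∈ GridClass M 4 := by
  have l1 : iL ≤ i := h1.le
  have l2 : i ≤ iR := h2.le
  have l3 : iL ≤ iR := l1.trans l2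
  have l4 : j ≤ jU := h3.le
  have n1 : iL ≠ i := ne_of_lt h1
  have n2 : i ≠ iR := ne_of_lt h2
  have n3 : iL ≠ iR := ne_of_lt (h1.trans h2)
  have n4 : j ≠ jU := ne_of_lt h3
  apply key M ![iL, i, i, iR] ![j, j, j, jU]
  · intro a b hab; fin_cases a <;> fin_cases b <;> simp_all
  · intro a b hab; fin_cases a <;> fin_cases b <;> simp_all
  · intro p; fin_cases p <;> simp [perm3412] <;> assumption
  · intro p q hpq; fin_cases p <;> fin_cases q <;> simp_all [perm3412, Prod.ext_iff]

lemma case2 {k ℓ : ℕ} (M : GMatrix k ℓ) (i iL iR : Fin k) (j jD : Fin ℓ)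
    (h1 : iL < i) (h2 : i < iR) (h3 : jD < j)
    (hx : M i j ≠ none) (hL : M iL j ≠ none) (hR : M iR j ≠ none) (hD : M i jD ≠ none) :
    perm3412 ∈ GridClass M 4 := by
  have l1 : iL ≤ i := h1.le
  have l2 : i ≤ iR := h2.le
  have l3 : iL ≤ iR := l1.trans l2
  have l4 : jD ≤ j := h3.le
  have n1 : iL ≠ i := ne_of_lt h1
  have n2 : i ≠ iR := ne_of_lt h2
  have n3 : iL ≠ iR := ne_of_lt (h1.trans h2)
  have n4 : jD ≠ j := ne_of_lt h3
  apply key M ![iL, i, i, iR] ![jD, j, j, j]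
  · intro a b hab; fin_cases a <;> fin_cases b <;> simp_all
  · intro a b hab; fin_cases a <;> fin_cases b <;> simp_all
  · intro p; fin_cases p <;> simp [perm3412] <;> assumption
  · intro p q hpq; fin_cases p <;> fin_cases q <;> simp_all [perm3412, Prod.ext_iff]

lemma case3 {k ℓ : ℕ} (M : GMatrix k ℓ) (i iL : Fin k) (j jD jU : Fin ℓ)
    (h1 : iL < i) (h3 : jD < j) (h4 : j < jU)
    (hx : M i j ≠ none) (hL : M iL j ≠ none) (hD : M i jD ≠ none) (hU : M i jU ≠ none) :
    perm3412 ∈ GridClass M 4 := by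
  have l1 : iL ≤ i := h1.le
  have l4 : jD ≤ j := h3.le
  have l5 : j ≤ jU := h4.le
  have l6 : jD ≤ jU := l4.trans l5
  have n1 : iL ≠ i := ne_of_lt h1
  have n4 : jD ≠ j := ne_of_lt h3
  have n5 : j ≠ jU := ne_of_lt h4
  have n6 : jD ≠ jU := ne_of_lt (h3.trans h4)
  apply key M ![iL, i, i, i] ![jD, j, j, jU]
  · intro a b hab; fin_cases a <;> fin_cases b <;> simp_all
  · intro a b hab; fin_cases a <;> fin_cases b <;> simp_all
  · intro p; fin_cases p <;> simp [perm3412] <;> assumption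
  · intro p q hpq; fin_cases p <;> fin_cases q <;> simp_all [perm3412, Prod.ext_iff]

lemma case4 {k ℓ : ℕ} (M : GMatrix k ℓ) (i iR : Fin k) (j jD jU : Fin ℓ)
    (h2 : i < iR) (h3 : jD < j) (h4 : j < jU)
    (hx : M i j ≠ none) (hR : M iR j ≠ none) (hD : M i jD ≠ none) (hU : M i jU ≠ none) :
    perm3412 ∈ GridClass M 4 := by
  have l2 : i ≤ iR := h2.le
  have l4 : jD ≤ j := h3.le
  have l5 : j ≤ jU := h4.le
  have l6 : jD ≤ jU := l4.trans l5
  have n2 : i ≠ iR := ne_of_lt h2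
  have n4 : jD ≠ j := ne_of_lt h3
  have n5 : j ≠ jU := ne_of_lt h4
  have n6 : jD ≠ jU := ne_of_lt (h3.trans h4)
  apply key M ![i, i, i, iR] ![jD, j, j, jU]
  · intro a b hab; fin_cases a <;> fin_cases b <;> simp_all
  · intro a b hab; fin_cases a <;> fin_cases b <;> simp_all
  · intro p; fin_cases p <;> simp [perm3412] <;> assumption
  · intro p q hpq; fin_cases p <;> fin_cases q <;> simp_all [perm3412, Prod.ext_iff]


def EP {k ℓ : ℕ} (M : GMatrix k ℓ) (x : Fin k × Fin ℓ) (d : ℕ) : Prop :=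
  match d with
  | 0 => ∃ jU, x.2 < jU ∧ M x.1 jU ≠ none
  | 1 => ∃ jD, jD < x.2 ∧ M x.1 jD ≠ none
  | 2 => ∃ iR, x.1 < iR ∧ M iR x.2 ≠ none
  | 3 => ∃ iL, iL < x.1 ∧ M iL x.2 ≠ none
  | _ => False

lemma toEP {k ℓ : ℕ} {M : GMatrix k ℓ} {x y : Fin k × Fin ℓ} {d : ℕ}
    (h : DirP M x y d) : EP M x d := by
  match d with
  | 0 => exact ⟨y.2, h.2.1, h.1 ▸ h.2.2.1⟩
  | 1 => exact ⟨y.2, h.2.1, h.1 ▸ h.2.2.1⟩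
  | 2 => exact ⟨y.1, h.2.1, h.1 ▸ h.2.2.1⟩
  | 3 => exact ⟨y.1, h.2.1, h.1 ▸ h.2.2.1⟩
  | (n+4) => exact absurd h (by simp [DirP])

/-- A graph with a vertex of degree at least 3 is not representable in `Av(3412)`:
if `Grid(M) ⊆ Av(3412)`, then every vertex of the cell graph of `M` has degree at
most 2. -/
theorem av3412_cellGraph_maxDegree_le_two {k ℓ : ℕ} (M : GMatrix k ℓ)
    (h : ∀ n : ℕ, ∀ π ∈ GridClass M n, ¬ Contains π perm3412) :
    ∀ x : Fin k × Fin ℓ, ((cellGraph M).neighborSet x).ncard ≤ 2 := by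
  intro x
  by_contra hc
  push_neg at hc
  rw [Set.two_lt_ncard (Set.toFinite _)] at hc
  obtain ⟨a, ha, b, hb, c0, hc0, hab, hac, hbc⟩ := hc
  rw [SimpleGraph.mem_neighborSet] at ha hb hc0
  obtain ⟨hx, da, hda4, hda⟩ := classify M x a ha
  obtain ⟨-, db, hdb4, hdb⟩ := classify M x b hb
  obtain ⟨-, dc, hdc4, hdc⟩ := classify M x c0 hc0
  have ea : EP M x da := toEP hda
  have eb : EP M x db := toEP hdb
  have ec : EP M x dc := toEP hdc
  have key3 : (EP M x 0 ∧ EP M x 1 ∧ EP M x 2) ∨ (EP M x 0 ∧ EP M x 1 ∧ EP M x 3)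
      ∨ (EP M x 0 ∧ EP M x 2 ∧ EP M x 3) ∨ (EP M x 1 ∧ EP M x 2 ∧ EP M x 3) := by
    interval_cases da <;> interval_cases db <;> interval_cases dc <;>
      first
        | exact absurd (dir_unique M x a b _ hda hdb) hab
        | exact absurd (dir_unique M x a c0 _ hda hdc) hac
        | exact absurd (dir_unique M x b c0 _ hdb hdc) hbc
        | tauto
  have hmem : perm3412 ∈ GridClass M 4 := by
    rcases key3 with ⟨hU, hD, hR⟩ | ⟨hU, hD, hL⟩ | ⟨hU, hR, hL⟩ | ⟨hD, hR, hL⟩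
    · obtain ⟨jU, h4, hU⟩ := hU; obtain ⟨jD, h3, hD⟩ := hD; obtain ⟨iR, h2, hR⟩ := hR
      exact case4 M x.1 iR x.2 jD jU h2 h3 h4 hx hR hD hU
    · obtain ⟨jU, h4, hU⟩ := hU; obtain ⟨jD, h3, hD⟩ := hD; obtain ⟨iL, h1, hL⟩ := hL
      exact case3 M x.1 iL x.2 jD jU h1 h3 h4 hx hL hD hU
    · obtain ⟨jU, h3, hU⟩ := hU; obtain ⟨iR, h2, hR⟩ := hR; obtain ⟨iL, h1, hL⟩ := hL
      exact case1 M x.1 iL iR x.2 jU h1 h2 h3 hx hL hR hU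
    · obtain ⟨jD, h3, hD⟩ := hD; obtain ⟨iR, h2, hR⟩ := hR; obtain ⟨iL, h1, hL⟩ := hL
      exact case2 M x.1 iL iR x.2 jD h1 h2 h3 hx hL hR hD
  exact h 4 perm3412 hmem ⟨id, strictMono_id, fun a b => Iff.rfl⟩
end

section
/- Let Grid(M) ⊆ Av(41352) be a monotone grid class, and suppose rows r_1 < r_2 and columns c_1 < c_2 are such that cells (r_1,c_2), (r_2,c_1), (r_2,c_2) are nonempty and (r_2,c_2) is an Inc-cell. Then: (1) cell (r_1,c_2) is a Dec-cell; (2) every cell (r,c) with r_1 ≤ r ≤ r_2 and c ≥ c_2, other than (r_1,c_2) and (r_2,c_2), is empty; (3) every cell (r,c) with r ≤ r_1 and c_1 ≤ c ≤ c_2, other than (r_1,c_2), is empty. -/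
/-- The pattern 41352 (as a permutation of `Fin 5`, 0-indexed values `3,0,2,4,1`). -/
def perm41352 : Equiv.Perm (Fin 5) :=
  ⟨![3, 0, 2, 4, 1], ![1, 4, 2, 0, 3],
    by intro x; fin_cases x <;> rfl, by intro x; fin_cases x <;> rfl⟩


/-!
Each conclusion is proved by contradiction: were it false, the five points of 41352 could be
distributed monotonically over the nonempty cells (c1,r2), (c2,r1), (c2,r2) and the offending
cell, each cell receiving points that are increasing or decreasing as its entry demands. Such a
placement is turned into a gridding by taking as column (row) boundaries the number of positions
(values) sent strictly left of (below) each line, so 41352 itself would lie in Grid(M).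
-/

open Finset

/-- For monotone `f`, these are the boundaries between its level sets. -/
def countBelow {m n : ℕ} (f : Fin m → Fin n) (j : Fin (n + 1)) : ℕ :=
  #{q | (f q : ℕ) < j}

section countBelow

variable {m n : ℕ} (f : Fin m → Fin n)

theorem countBelow_mono : Monotone (countBelow f) := fun _ _ hij =>
  card_le_card <| monotone_filter_right _ fun _ _ hq => lt_of_lt_of_le hq (Fin.le_def.mp hij)

@[simp] theorem countBelow_zero : countBelow f 0 = 0 := by
  simp [countBelow]

@[simp] theorem countBelow_last : countBelow f (Fin.last n) = m := by
  simp [countBelow]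

variable {f}

theorem lt_countBelow_iff (hf : Monotone f) (p : Fin m) (j : Fin (n + 1)) :
    (p : ℕ) < countBelow f j ↔ (f p : ℕ) < j := by
  constructor
  · intro hp
    by_contra! hj
    have hsub : ({q | (f q : ℕ) < j} : Finset (Fin m)) ⊆ Iio p := fun q hq => by
      simp only [mem_filter, mem_univ, true_and] at hq
      exact mem_Iio.mpr (lt_of_not_ge fun hpq => (hq.trans_le hj).not_ge (hf hpq))
    have := card_le_card hsub
    simp only [Fin.card_Iio] at this
    exact (hp.trans_le this).false
  · intro hj
    have hsub : Iic p ⊆ ({q | (f q : ℕ) < j} : Finset (Fin m)) := fun q hq => by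
      simp only [mem_filter, mem_univ, true_and]
      exact lt_of_le_of_lt (Fin.le_def.mp (hf (mem_Iic.mp hq))) hj
    have := card_le_card hsub
    simp only [Fin.card_Iic] at this
    exact Nat.lt_of_succ_le this

theorem eq_of_countBelow_le_of_lt (hf : Monotone f) {p : Fin m} {i : Fin n}
    (hle : countBelow f i.castSucc ≤ p) (hlt : (p : ℕ) < countBelow f i.succ) : f p = i := by
  rw [← not_lt, lt_countBelow_iff hf] at hle
  rw [lt_countBelow_iff hf] at hlt
  simp only [Fin.val_castSucc, Fin.val_succ] at hle hlt
  omega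

end countBelow

/-- Position `p` of `σ` goes to column `col p`, value `v` to row `row v`. -/
structure IsPlacement {m k ℓ : ℕ} (M : GMatrix k ℓ) (σ : Equiv.Perm (Fin m))
    (col : Fin m → Fin k) (row : Fin m → Fin ℓ) : Prop where
  monotone_col : Monotone col
  monotone_row : Monotone row
  ne_none : ∀ p, M (col p) (row (σ p)) ≠ none
  eq_some : ∀ p q, p < q → col p = col q → row (σ p) = row (σ q) →
    M (col p) (row (σ p)) = some (decide (σ p < σ q))

theorem IsPlacement.mem_gridClass {m k ℓ : ℕ} {M : GMatrix k ℓ} {σ : Equiv.Perm (Fin m)}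
    {col : Fin m → Fin k} {row : Fin m → Fin ℓ} (h : IsPlacement M σ col row) :
    σ ∈ GridClass M m := by
  have cell : ∀ {p i j}, InCell (countBelow col) (countBelow row) σ p i j →
      col p = i ∧ row (σ p) = j := fun ⟨h₁, h₂, h₃, h₄⟩ =>
    ⟨eq_of_countBelow_le_of_lt h.monotone_col h₁ h₂,
      eq_of_countBelow_le_of_lt h.monotone_row h₃ h₄⟩
  refine ⟨countBelow col, countBelow row, countBelow_mono col, countBelow_mono row,
    countBelow_zero col, countBelow_last col, countBelow_zero row, countBelow_last row,
    fun i j => ⟨fun p hp => ?_, fun hM p q hp hq hpq => ?_, fun hM p q hp hq hpq => ?_⟩⟩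
  · obtain ⟨rfl, rfl⟩ := cell hp
    exact h.ne_none p
  all_goals
    obtain ⟨rfl, rfl⟩ := cell hp
    obtain ⟨hcol, hrow⟩ := cell hq
    have := hM.symm.trans (h.eq_some p q hpq hcol.symm hrow.symm)
  · simpa using this
  · simp only [Option.some.injEq, Bool.false_eq, decide_eq_false_iff_not, not_lt] at this
    exact this.lt_of_ne fun e => hpq.ne (σ.injective e).symm

theorem contains_refl {m : ℕ} (σ : Equiv.Perm (Fin m)) : Contains σ σ :=
  ⟨id, strictMono_id, fun _ _ => Iff.rfl⟩

section Av41352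

variable {k ℓ : ℕ} {M : GMatrix k ℓ} {r1 r2 : Fin ℓ} {c1 c2 : Fin k}

theorem av41352_below_eq_dec (hAv : perm41352 ∉ GridClass M 5) (hr : r1 < r2) (hc : c1 < c2)
    (hbelow : M c2 r1 ≠ none) (hleft : M c1 r2 ≠ none) (hinc : M c2 r2 = some true) :
    M c2 r1 = some false := by
  obtain ⟨b, hM⟩ := Option.ne_none_iff_exists'.mp hbelow
  cases b
  · exact hM
  -- 4 in (c1,r2); 1 2 ascending in (c2,r1); 3 5 in (c2,r2)
  refine absurd (IsPlacement.mem_gridClass (col := ![c1, c2, c2, c2, c2])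
    (row := ![r1, r1, r2, r2, r2]) ⟨?_, ?_, ?_, ?_⟩) hAv
  · simp [hc.le]
  · simp [hr.le]
  · intro p; fin_cases p <;> simp [perm41352, hleft, hinc, hM]
  · intro p q hpq; fin_cases p <;> fin_cases q <;> simp [perm41352] at hpq ⊢ <;> grind

theorem av41352_between_eq_none (hAv : perm41352 ∉ GridClass M 5) (hc : c1 < c2)
    (hbelow : M c2 r1 ≠ none) (hleft : M c1 r2 ≠ none) (hinc : M c2 r2 = some true)
    {rr : Fin ℓ} (hlo : r1 < rr) (hhi : rr < r2) : M c2 rr = none := by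
  by_contra hne
  obtain ⟨b, hM⟩ := Option.ne_none_iff_exists'.mp hne
  cases b
  · -- 4 in (c1,r2); 1 in (c2,r1); 3 2 descending in (c2,rr); 5 in (c2,r2)
    refine hAv (IsPlacement.mem_gridClass (col := ![c1, c2, c2, c2, c2])
      (row := ![r1, rr, rr, r2, r2]) ⟨?_, ?_, ?_, ?_⟩)
    · simp [hc.le]
    · simp [hlo.le, hhi.le]
    · intro p; fin_cases p <;> simp [perm41352, hbelow, hleft, hinc, hM]
    · intro p q hpq; fin_cases p <;> fin_cases q <;> simp [perm41352] at hpq ⊢ <;> grind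
  · -- 4 in (c1,r2); 1 2 ascending in (c2,rr); 3 5 in (c2,r2)
    refine hAv (IsPlacement.mem_gridClass (col := ![c1, c2, c2, c2, c2])
      (row := ![rr, rr, r2, r2, r2]) ⟨?_, ?_, ?_, ?_⟩)
    · simp [hc.le]
    · simp [hhi.le]
    · intro p; fin_cases p <;> simp [perm41352, hleft, hinc, hM]
    · intro p q hpq; fin_cases p <;> fin_cases q <;> simp [perm41352] at hpq ⊢ <;> grind

theorem av41352_right_eq_none (hAv : perm41352 ∉ GridClass M 5) (hr : r1 < r2) (hc : c1 < c2)
    (hbelow : M c2 r1 ≠ none) (hleft : M c1 r2 ≠ none) (hinc : M c2 r2 = some true)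
    {cc : Fin k} {rr : Fin ℓ} (hcc : c2 < cc) (hlo : r1 ≤ rr) (hhi : rr ≤ r2) :
    M cc rr = none := by
  by_contra hM
  -- 4 in (c1,r2); 1 in (c2,r1); 3 5 in (c2,r2); 2 in (cc,rr)
  refine hAv (IsPlacement.mem_gridClass (col := ![c1, c2, c2, c2, cc])
    (row := ![r1, rr, r2, r2, r2]) ⟨?_, ?_, ?_, ?_⟩)
  · simp [hc.le, hcc.le]
  · simp [hlo, hhi]
  · intro p; fin_cases p <;> simp [perm41352, hbelow, hleft, hinc, hM]
  · intro p q hpq; fin_cases p <;> fin_cases q <;> simp [perm41352] at hpq ⊢ <;> grind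

theorem av41352_below_left_eq_none (hAv : perm41352 ∉ GridClass M 5) (hr : r1 < r2)
    (hc : c1 < c2) (hbelow : M c2 r1 ≠ none) (hleft : M c1 r2 ≠ none)
    (hinc : M c2 r2 = some true) {cc : Fin k} {rr : Fin ℓ} (hlo : c1 ≤ cc) (hhi : cc ≤ c2)
    (hrr : rr ≤ r1) (hne : ¬(cc = c2 ∧ rr = r1)) : M cc rr = none := by
  by_contra hM
  -- 4 in (c1,r2); 1 in (cc,rr); 3 5 in (c2,r2); 2 in (c2,r1)
  refine hAv (IsPlacement.mem_gridClass (col := ![c1, cc, c2, c2, c2])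
    (row := ![rr, r1, r2, r2, r2]) ⟨?_, ?_, ?_, ?_⟩)
  · simp [hlo, hhi]
  · simp [hrr, hr.le]
  · intro p; fin_cases p <;> simp [perm41352, hbelow, hleft, hinc, hM]
  · intro p q hpq; fin_cases p <;> fin_cases q <;> simp [perm41352] at hpq ⊢ <;> grind

end Av41352

/-- Suppose `Grid(M) ⊆ Av(41352)`, rows `r1 < r2` and columns `c1 < c2` are such that
cells `(r1,c2)`, `(r2,c1)`, `(r2,c2)` are nonempty and `(r2,c2)` is an Inc-cell.  Then
`(r1,c2)` is a Dec-cell; every cell `(r,c)` with `r1 ≤ r ≤ r2`, `c ≥ c2` other than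
`(r1,c2)`, `(r2,c2)` is empty; and every cell `(r,c)` with `r ≤ r1`, `c1 ≤ c ≤ c2`
other than `(r1,c2)` is empty. -/
theorem av41352_grid_structure {k ℓ : ℕ} (M : GMatrix k ℓ)
    (hAv : ∀ n : ℕ, ∀ π ∈ GridClass M n, ¬ Contains π perm41352)
    (r1 r2 : Fin ℓ) (c1 c2 : Fin k) (hr : r1 < r2) (hc : c1 < c2)
    (h1 : M c2 r1 ≠ none) (h2 : M c1 r2 ≠ none) (h3 : M c2 r2 = some true) :
    M c2 r1 = some false ∧
    (∀ (cc : Fin k) (rr : Fin ℓ), r1 ≤ rr → rr ≤ r2 → c2 ≤ cc →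
      ¬(cc = c2 ∧ rr = r1) → ¬(cc = c2 ∧ rr = r2) → M cc rr = none) ∧
    (∀ (cc : Fin k) (rr : Fin ℓ), rr ≤ r1 → c1 ≤ cc → cc ≤ c2 →
      ¬(cc = c2 ∧ rr = r1) → M cc rr = none) := by
  have h41352 : perm41352 ∉ GridClass M 5 := fun h => hAv 5 _ h (contains_refl _)
  refine ⟨av41352_below_eq_dec h41352 hr hc h1 h2 h3, ?_,
    fun cc rr hrr hlo hhi hne => av41352_below_left_eq_none h41352 hr hc h1 h2 h3 hlo hhi hrr hne⟩
  intro cc rr hlo hhi hcc hne1 hne2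
  obtain rfl | hcc := hcc.eq_or_lt
  · exact av41352_between_eq_none h41352 hc h1 h2 h3
      (hlo.lt_of_ne fun h => hne1 ⟨rfl, h.symm⟩) (hhi.lt_of_ne fun h => hne2 ⟨rfl, h⟩)
  · exact av41352_right_eq_none h41352 hr hc h1 h2 h3 hcc hlo hhi
end
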